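/- arXiv:1904.05836 — 9 statements merged into one kernel-verified Lean document; each statement's English description precedes it below -/
import Mathlib

section
/- Let D be a Poisson field of characteristic zero (a field equipped with a Poisson bracket) that has transcendence degree at most 1 over the base field k. Then the Poisson bracket on D is identically zero. -/
/-- A Poisson structure on a commutative `k`-algebra `A`: a bilinear bracket making `A`
a Lie algebra such that `{a, -}` is a derivation for every `a`. -/
structure PoissonStructure (k A : Type*) [CommRing k] [CommRing A] [Algebra k A] where
  bracket : A → A → A
  add_left : ∀ a b c : A, bracket (a + b) c = bracket a c + bracket b c
  smul_left : ∀ (r : k) (a b : A), bracket (r • a) b = r • bracket a b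
  antisymm : ∀ a b : A, bracket a b = - bracket b a
  jacobi : ∀ a b c : A,
    bracket a (bracket b c) = bracket (bracket a b) c + bracket b (bracket a c)
  leibniz : ∀ a b c : A, bracket a (b * c) = bracket a b * c + b * bracket a c

open MvPolynomial

namespace PoissonAux

variable {k : Type*} [CommRing k]

lemma coeff_pderiv {σ : Type*} [DecidableEq σ] (i : σ) (p : MvPolynomial σ k) (m : σ →₀ ℕ) :
    coeff m (pderiv i p) = (m i + 1 : ℕ) * coeff (m + Finsupp.single i 1) p := by
  induction p using MvPolynomial.induction_on' with
  | monomial s a =>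
    rw [pderiv_monomial, coeff_monomial, coeff_monomial]
    by_cases h : s = m + Finsupp.single i 1
    · subst h
      rw [if_pos (add_tsub_cancel_right m (Finsupp.single i 1)), if_pos rfl]
      simp [mul_comm]
    · rw [if_neg h]
      by_cases h2 : s - Finsupp.single i 1 = m
      · have hsi : s i = 0 := by
          by_contra hsi
          apply h
          have hle : Finsupp.single i 1 ≤ s := by
            rw [Finsupp.single_le_iff]
            omega
          rw [← h2, tsub_add_cancel_of_le hle]
        rw [if_pos h2, hsi]
        simp
      · rw [if_neg h2, mul_zero]
  | add p q hp hq => simp [hp, hq, mul_add]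

end PoissonAux

namespace PoissonAux2
open PoissonAux

variable {k : Type*} [Field k] [CharZero k]

lemma eq_C_of_pderiv_zero {σ : Type*} [DecidableEq σ] (p : MvPolynomial σ k)
    (h : ∀ i, pderiv i p = 0) : p = C (coeff 0 p) := by
  ext m
  rcases eq_or_ne m 0 with rfl | hm
  · simp
  · rw [coeff_C, if_neg (Ne.symm hm)]
    obtain ⟨i, hi⟩ : ∃ i, m i ≠ 0 := by
      by_contra hc
      push_neg at hc
      exact hm (Finsupp.ext hc)
    have h1 : coeff (m - Finsupp.single i 1) (pderiv i p) = 0 := by rw [h i]; simp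
    rw [PoissonAux.coeff_pderiv] at h1
    have hle : Finsupp.single i 1 ≤ m := by rw [Finsupp.single_le_iff]; omega
    rw [tsub_add_cancel_of_le hle] at h1
    rcases mul_eq_zero.mp h1 with h2 | h2
    · exact absurd h2 (Nat.cast_ne_zero.mpr (Nat.succ_ne_zero _))
    · exact h2

lemma totalDegree_pderiv_lt {σ : Type*} [DecidableEq σ] {i : σ} {p : MvPolynomial σ k}
    (h : pderiv i p ≠ 0) : (pderiv i p).totalDegree < p.totalDegree := by
  have hpos : 0 < p.totalDegree := by
    rcases Nat.eq_zero_or_pos p.totalDegree with hp | hp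
    · exfalso
      apply h
      have : ∀ m ∈ p.support, ∀ x, m x = 0 := (totalDegree_eq_zero_iff σ p).mp hp
      apply pderiv_eq_zero_of_notMem_vars
      intro hv
      obtain ⟨d, hd, hid⟩ := (mem_vars i).mp hv
      exact absurd (this d hd i) (Finsupp.mem_support_iff.mp hid)
    · exact hp
  rw [totalDegree, Finset.sup_lt_iff (by simpa using hpos)]
  intro m hm
  have hc : coeff m (pderiv i p) ≠ 0 := mem_support_iff.mp hm
  rw [PoissonAux.coeff_pderiv] at hc
  have hc2 : coeff (m + Finsupp.single i 1) p ≠ 0 := fun h0 => hc (by rw [h0, mul_zero])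
  have := le_totalDegree (p := p) (mem_support_iff.mpr hc2)
  have hsum : ((m + Finsupp.single i 1).sum fun _ e => e) = (m.sum fun _ e => e) + 1 := by
    rw [Finsupp.sum_add_index (by simp) (by simp)]
    simp
  omega

end PoissonAux2

section Main

variable {k D : Type*} [Field k] [CharZero k] [Field D] [Algebra k D]

/-- The derivation `{c, -}` associated to a Poisson structure. -/
def PoissonStructure.toDeriv (P : PoissonStructure k D) (c : D) : Derivation k D D where
  toFun := P.bracket c
  map_add' x y := by
    rw [P.antisymm c (x + y), P.add_left, neg_add, ← P.antisymm, ← P.antisymm]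
  map_smul' r x := by
    show P.bracket c (r • x) = r • P.bracket c x
    rw [P.antisymm c (r • x), P.smul_left, ← smul_neg, ← P.antisymm]
  map_one_eq_zero' := by
    show P.bracket c 1 = 0
    have h := P.leibniz c 1 1
    rw [one_mul, mul_one, one_mul] at h
    exact left_eq_add.mp h
  leibniz' x y := by
    show P.bracket c (x * y) = x • P.bracket c y + y • P.bracket c x
    simp only [smul_eq_mul]
    rw [P.leibniz]
    ring

lemma chainRule (d : Derivation k D D) (v : Fin 2 → D) (p : MvPolynomial (Fin 2) k) :
    d (aeval v p) =
      aeval v (pderiv 0 p) * d (v 0) + aeval v (pderiv 1 p) * d (v 1) := by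
  induction p using MvPolynomial.induction_on with
  | C a => simp [aeval_C, Derivation.map_algebraMap, pderiv_C]
  | add p q hp hq => simp only [map_add, Derivation.map_add, hp, hq]; ring
  | mul_X p i hp =>
    fin_cases i <;>
      simp only [Fin.mk_zero, Fin.mk_one, Fin.isValue, map_mul, aeval_X, Derivation.leibniz,
        smul_eq_mul, pderiv_mul, map_add, pderiv_X_self, map_one,
        pderiv_X_of_ne (show (0 : Fin 2) ≠ 1 by decide),
        pderiv_X_of_ne (show (1 : Fin 2) ≠ 0 by decide), map_zero, hp] <;> ring

end Main

namespace PoissonAux3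
open PoissonAux2

variable {k : Type*} [Field k] [CharZero k]

lemma pderiv_eq_zero_of_totalDegree_eq_zero {σ : Type*} [DecidableEq σ] {i : σ}
    {p : MvPolynomial σ k} (hp : p.totalDegree = 0) : pderiv i p = 0 := by
  have h : ∀ m ∈ p.support, ∀ x, m x = 0 := (totalDegree_eq_zero_iff σ p).mp hp
  apply pderiv_eq_zero_of_notMem_vars
  intro hv
  obtain ⟨d, hd, hid⟩ := (mem_vars i).mp hv
  exact absurd (h d hd i) (Finsupp.mem_support_iff.mp hid)

end PoissonAux3

@[simp] lemma PoissonStructure.toDeriv_apply {k D : Type*} [Field k] [CharZero k]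
    [Field D] [Algebra k D] (P : PoissonStructure k D) (c x : D) :
    P.toDeriv c x = P.bracket c x := rfl

/-- A Poisson field of characteristic zero of transcendence degree at most one over the
base field has identically zero Poisson bracket. -/
theorem poissonField_trdeg_le_one_trivial {k D : Type*} [Field k] [CharZero k]
    [Field D] [Algebra k D]
    (P : PoissonStructure k D)
    (htr : ∀ x y : D, ¬ AlgebraicIndependent k ![x, y]) :
    ∀ a b : D, P.bracket a b = 0 := by

  haveI : CharZero D := charZero_of_injective_algebraMap (algebraMap k D).injective
  intro a b
  -- self-brackets vanish
  have hself : ∀ c : D, P.bracket c c = 0 := by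
    intro c
    have h := P.antisymm c c
    have h2 : (2 : D) * P.bracket c c = 0 := by linear_combination h
    rcases mul_eq_zero.mp h2 with h3 | h3
    · exact absurd h3 two_ne_zero
    · exact h3
  -- the contradiction from a constant relation
  have hCcase : ∀ p : MvPolynomial (Fin 2) k, p ≠ 0 → aeval ![a, b] p = 0 →
      (∀ i, pderiv i p = 0) → False := by
    intro p hp0 hpe hpd
    have hC := PoissonAux2.eq_C_of_pderiv_zero p hpd
    rw [hC, aeval_C] at hpe
    have : coeff 0 p = 0 := by
      apply (algebraMap k D).injective
      rw [hpe, map_zero]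
    exact hp0 (by rw [hC, this, map_zero])
  have key : ∀ (n : ℕ) (p : MvPolynomial (Fin 2) k), p.totalDegree ≤ n → p ≠ 0 →
      aeval ![a, b] p = 0 → P.bracket a b = 0 := by
    intro n
    induction n with
    | zero =>
      intro p hd hp0 hpe
      exact absurd (hCcase p hp0 hpe fun i =>
        PoissonAux3.pderiv_eq_zero_of_totalDegree_eq_zero (Nat.le_zero.mp hd)) id
    | succ n ih =>
      intro p hd hp0 hpe
      have hca := chainRule (P.toDeriv a) ![a, b] p
      have hcb := chainRule (P.toDeriv b) ![a, b] p
      rw [hpe] at hca hcb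
      simp only [map_zero, Matrix.cons_val_zero, Matrix.cons_val_one, Matrix.head_cons,
        PoissonStructure.toDeriv_apply, hself, mul_zero, zero_add, add_zero] at hca hcb
      -- hca : 0 = aeval ![a,b] (pderiv 1 p) * P.bracket a b
      -- hcb : 0 = aeval ![a,b] (pderiv 0 p) * P.bracket b a
      by_cases hv : aeval ![a, b] (pderiv 1 p) = 0
      · by_cases hu : aeval ![a, b] (pderiv 0 p) = 0
        · by_cases h1 : pderiv 1 p = 0
          · by_cases h0 : pderiv 0 p = 0
            · exact absurd (hCcase p hp0 hpe fun i => by fin_cases i <;> assumption) id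
            · exact ih (pderiv 0 p)
                (by have := PoissonAux2.totalDegree_pderiv_lt h0; omega) h0 hu
          · exact ih (pderiv 1 p)
              (by have := PoissonAux2.totalDegree_pderiv_lt h1; omega) h1 hv
        · rcases mul_eq_zero.mp hcb.symm with h | h
          · exact absurd h hu
          · rw [P.antisymm b a, neg_eq_zero] at h
            exact h
      · rcases mul_eq_zero.mp hca.symm with h | h
        · exact absurd h hv
        · exact h
  have hni := htr a b
  rw [AlgebraicIndependent] at hni
  obtain ⟨p, q, hpq, hne⟩ := Function.not_injective_iff.mp hni
  have hr0 : p - q ≠ 0 := sub_ne_zero.mpr hne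
  have hre : aeval ![a, b] (p - q) = 0 := by
    rw [map_sub, hpq, sub_self]
  exact key (p - q).totalDegree (p - q) le_rfl hr0 hre
end

section
/- Let k be a field of characteristic zero and let B be an affine Poisson integral domain over k of Krull dimension at most 1. Then the Poisson bracket on B is trivial (identically zero). -/
open Polynomial


theorem aux_charZero (k : Type*) {B : Type*} [Field k] [CharZero k] [CommRing B] [IsDomain B]
    [Algebra k B] : CharZero B :=
  charZero_of_injective_algebraMap (algebraMap k B).injective

section Frac

variable {k B : Type*} [Field k] [CommRing B] [IsDomain B] [Algebra k B]

/-- The submonoid of nonzero elements of a subalgebra of a domain. -/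
def nzS (A : Subalgebra k B) : Submonoid B where
  carrier := {x | x ∈ A ∧ x ≠ 0}
  one_mem' := ⟨A.one_mem, one_ne_zero⟩
  mul_mem' := fun hx hy => ⟨A.mul_mem hx.1 hy.1, mul_ne_zero hx.2 hy.2⟩

lemma nzS_le (A : Subalgebra k B) : nzS A ≤ nonZeroDivisors B :=
  fun _ hx => mem_nonZeroDivisors_of_ne_zero hx.2

instance (A : Subalgebra k B) : IsDomain (Localization (nzS A)) :=
  IsLocalization.isDomain_of_le_nonZeroDivisors (M := nzS A) (S := Localization (nzS A)) (nzS_le A)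

lemma loc_inj (A : Subalgebra k B) :
    Function.Injective (algebraMap B (Localization (nzS A))) :=
  IsLocalization.injective _ (nzS_le A)

lemma loc_ne (A : Subalgebra k B) {x : B} (hx : x ≠ 0) :
    algebraMap B (Localization (nzS A)) x ≠ 0 := fun h =>
  hx (loc_inj A (by simpa using h))

/-- The fraction field of `A` inside the localization. -/
def fracK (A : Subalgebra k B) : Subring (Localization (nzS A)) where
  carrier := {x | ∃ (p : B) (u : nzS A), p ∈ A ∧
    x * algebraMap B (Localization (nzS A)) u = algebraMap B (Localization (nzS A)) p}
  one_mem' := ⟨1, 1, A.one_mem, by simp⟩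
  zero_mem' := ⟨0, 1, A.zero_mem, by simp⟩
  add_mem' := by
    rintro x y ⟨p, u, hp, hx⟩ ⟨r, v, hr, hy⟩
    set φ := algebraMap B (Localization (nzS A))
    refine ⟨p * v + r * u, u * v, A.add_mem (A.mul_mem hp v.2.1) (A.mul_mem hr u.2.1), ?_⟩
    have hc : ((u * v : nzS A) : B) = (u : B) * (v : B) := rfl
    rw [hc, map_mul, map_add, map_mul, map_mul]
    linear_combination φ v * hx + φ u * hy
  neg_mem' := by
    rintro x ⟨p, u, hp, hx⟩
    exact ⟨-p, u, A.neg_mem hp, by rw [map_neg]; linear_combination -hx⟩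
  mul_mem' := by
    rintro x y ⟨p, u, hp, hx⟩ ⟨r, v, hr, hy⟩
    set φ := algebraMap B (Localization (nzS A))
    refine ⟨p * r, u * v, A.mul_mem hp hr, ?_⟩
    have hc : ((u * v : nzS A) : B) = (u : B) * (v : B) := rfl
    rw [hc, map_mul, map_mul]
    linear_combination (y * φ v) * hx + φ p * hy

lemma fracK_isField (A : Subalgebra k B) : IsField (fracK A) := by
  set φ := algebraMap B (Localization (nzS A)) with hφdef
  refine ⟨⟨0, 1, fun h => zero_ne_one (congrArg Subtype.val h)⟩, mul_comm, ?_⟩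
  rintro ⟨x, p, u, hp, hx⟩ hx0
  have hxne : x ≠ 0 := fun h => hx0 (Subtype.ext h)
  have hpne : p ≠ 0 := by
    rintro rfl
    rw [map_zero] at hx
    rcases mul_eq_zero.mp hx with h | h
    · exact hxne h
    · exact loc_ne A u.2.2 h
  set y : Localization (nzS A) := IsLocalization.mk' _ (u : B) (⟨p, hp, hpne⟩ : nzS A) with hydef
  have hyspec : y * φ p = φ u := IsLocalization.mk'_spec _ (u : B) (⟨p, hp, hpne⟩ : nzS A)
  have hymem : y ∈ fracK A := ⟨(u : B), ⟨p, hp, hpne⟩, u.2.1, hyspec⟩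
  refine ⟨⟨y, hymem⟩, ?_⟩
  have hne : φ ((u : B) * p) ≠ 0 := loc_ne A (mul_ne_zero u.2.2 hpne)
  have heq : (x * y) * φ ((u : B) * p) = 1 * φ ((u : B) * p) := by
    rw [map_mul]
    linear_combination (y * φ p) * hx + φ p * hyspec
  exact Subtype.ext (mul_right_cancel₀ hne heq)

noncomputable instance (A : Subalgebra k B) : Field (fracK A) := (fracK_isField A).toField

lemma fracK_finiteType [Algebra.FiniteType k B] (A : Subalgebra k B) :
    Algebra.FiniteType (fracK A) (Localization (nzS A)) := by
  classical
  set φ := algebraMap B (Localization (nzS A)) with hφdef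
  obtain ⟨s, hs⟩ := (inferInstance : Algebra.FiniteType k B).out
  have hKmem : ∀ x : Localization (nzS A), x ∈ fracK A →
      x ∈ Algebra.adjoin (fracK A) (↑(s.image φ) : Set (Localization (nzS A))) := by
    intro x hx
    exact (Algebra.adjoin (fracK A) _).algebraMap_mem (⟨x, hx⟩ : fracK A)
  refine ⟨⟨s.image φ, ?_⟩⟩
  rw [eq_top_iff]
  rintro x -
  obtain ⟨⟨r, u⟩, rfl⟩ := IsLocalization.mk'_surjective (nzS A) x
  dsimp only
  rw [IsLocalization.mk'_eq_mul_mk'_one]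
  refine mul_mem ?_ ?_
  · have hr : r ∈ Algebra.adjoin k (↑s : Set B) := by rw [hs]; trivial
    induction hr using Algebra.adjoin_induction with
    | mem z hz => exact Algebra.subset_adjoin (by
        rw [Finset.coe_image]; exact Set.mem_image_of_mem φ hz)
    | algebraMap c =>
      exact hKmem _ ⟨algebraMap k B c, 1, A.algebraMap_mem c, by simp⟩
    | add z w _ _ hz hw => rw [map_add]; exact add_mem hz hw
    | mul z w _ _ hz hw => rw [map_mul]; exact mul_mem hz hw
  · refine hKmem _ ⟨1, u, A.one_mem, ?_⟩
    exact IsLocalization.mk'_spec (Localization (nzS A)) 1 u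

end Frac

section Geo

variable {k B : Type*} [Field k] [CharZero k] [CommRing B] [IsDomain B] [Algebra k B]

omit [CharZero k] in
lemma mem_fracK {A : Subalgebra k B} {x : Localization (nzS A)} :
    x ∈ fracK A ↔ ∃ (p : B) (u : nzS A), p ∈ A ∧
      x * algebraMap B (Localization (nzS A)) u = algebraMap B (Localization (nzS A)) p :=
  Iff.rfl

theorem exists_relation [Algebra.FiniteType k B] (hdim : ringKrullDim B ≤ 1)
    (a b : B) (ha : ¬IsAlgebraic k a) :
    ∃ q : Polynomial B, q ≠ 0 ∧ (∀ i, q.coeff i ∈ Algebra.adjoin k {a}) ∧ q.eval b = 0 := by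
  classical
  by_contra Hc
  push_neg at Hc
  set A := Algebra.adjoin k {a} with hAdef
  set T := Localization (nzS A) with hTdef
  set φ := algebraMap B T with hφdef
  have hφ : Function.Injective φ := loc_inj A
  -- T is not a field (Zariski's lemma plus clearing denominators)
  have hTnf : ¬IsField T := by
    intro hT
    letI : Field T := hT.toField
    haveI : Algebra.FiniteType (fracK A) T := fracK_finiteType A
    haveI : Module.Finite (fracK A) T := finite_of_finite_type_of_isJacobsonRing (fracK A) T
    haveI : Algebra.IsIntegral (fracK A) T := Algebra.IsIntegral.of_finite (fracK A) T
    obtain ⟨P, hPm, hPe⟩ := Algebra.IsIntegral.isIntegral (R := fracK A) (φ b)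
    have claim : ∀ P : Polynomial (fracK A), ∃ (u : nzS A) (q : Polynomial B),
        (∀ i, q.coeff i ∈ A) ∧ q.map φ = C (φ u) * P.map (algebraMap (fracK A) T) := by
      intro P
      induction P using Polynomial.induction_on' with
      | add P1 P2 ih1 ih2 =>
        obtain ⟨u, q, hqA, hq⟩ := ih1
        obtain ⟨v, r, hrA, hr⟩ := ih2
        refine ⟨u * v, C (v : B) * q + C (u : B) * r, fun i => ?_, ?_⟩
        · simp only [coeff_add, coeff_C_mul]
          exact A.add_mem (A.mul_mem v.2.1 (hqA i)) (A.mul_mem u.2.1 (hrA i))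
        · have hc : ((u * v : nzS A) : B) = (u : B) * (v : B) := rfl
          rw [Polynomial.map_add, Polynomial.map_mul, Polynomial.map_mul, Polynomial.map_C,
            Polynomial.map_C, Polynomial.map_add, hq, hr, hc, map_mul, C_mul]
          ring
      | monomial n c =>
        obtain ⟨p, u, hp, hc⟩ := mem_fracK.mp c.2
        refine ⟨u, monomial n p, fun i => ?_, ?_⟩
        · rw [coeff_monomial]
          split
          · exact hp
          · exact A.zero_mem
        · rw [Polynomial.map_monomial, Polynomial.map_monomial, C_mul_monomial]
          congr 1
          rw [show algebraMap (fracK A) T c = (c : T) from rfl, ← hc]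
          ring
    obtain ⟨u, q, hqA, hq⟩ := claim P
    have hPne : P.map (algebraMap (fracK A) T) ≠ 0 :=
      (Polynomial.map_ne_zero_iff (algebraMap (fracK A) T).injective).mpr hPm.ne_zero
    have hq0 : q ≠ 0 := by
      intro h
      rw [h, Polynomial.map_zero] at hq
      exact (mul_ne_zero (fun hC => loc_ne A u.2.2 (Polynomial.C_eq_zero.mp hC)) hPne) hq.symm
    have heval : q.eval b = 0 := by
      apply hφ
      rw [map_zero, ← Polynomial.eval₂_at_apply φ b, ← Polynomial.eval_map, hq,
        Polynomial.eval_mul, eval_C, Polynomial.eval_map, hPe, mul_zero]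
    exact Hc q hq0 hqA heval
  -- extract a nonzero prime of T, pull back to B
  obtain ⟨M, hM0, hMp⟩ := Ring.not_isField_iff_exists_prime.mp hTnf
  haveI := hMp
  set p : Ideal B := M.comap φ with hpdef
  haveI hpp : p.IsPrime := Ideal.IsPrime.comap φ
  have hpS : ∀ x, x ∈ nzS A → x ∉ p := by
    intro x hx hxp
    exact hMp.ne_top (M.eq_top_of_isUnit_mem hxp (IsLocalization.map_units T ⟨x, hx⟩))
  have hp0 : p ≠ ⊥ := by
    obtain ⟨t, htM, ht0⟩ := Submodule.exists_mem_ne_zero_of_ne_bot hM0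
    obtain ⟨⟨r, u⟩, hru⟩ := IsLocalization.mk'_surjective (nzS A) t
    dsimp only at hru
    have hr0 : r ≠ 0 := by
      rintro rfl
      rw [IsLocalization.mk'_zero] at hru
      exact ht0 hru.symm
    have hrp : r ∈ p := by
      show φ r ∈ M
      rw [← IsLocalization.mk'_spec T r u, hru]
      exact M.mul_mem_right _ htM
    intro h
    rw [h] at hrp
    exact hr0 hrp
  -- the quotient by p is again not a field
  haveI : IsDomain (B ⧸ p) := Ideal.Quotient.isDomain p
  have hB2 : ¬IsField (B ⧸ p) := by
    intro hF
    letI : Field (B ⧸ p) := hF.toField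
    haveI : Algebra.FiniteType k (B ⧸ p) :=
      Algebra.FiniteType.of_surjective (Ideal.Quotient.mkₐ k p)
        (Ideal.Quotient.mkₐ_surjective k p)
    haveI : Module.Finite k (B ⧸ p) := finite_of_finite_type_of_isJacobsonRing k (B ⧸ p)
    haveI : Algebra.IsIntegral k (B ⧸ p) := Algebra.IsIntegral.of_finite k (B ⧸ p)
    obtain ⟨f, hfm, hfe⟩ := Algebra.IsIntegral.isIntegral (R := k) (Ideal.Quotient.mkₐ k p a)
    have h1 : Polynomial.aeval a f ∈ p := by
      have hπ : Ideal.Quotient.mkₐ k p (Polynomial.aeval a f) = 0 := by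
        rw [← Polynomial.aeval_algHom_apply, Polynomial.aeval_def]
        exact hfe
      rwa [Ideal.Quotient.mkₐ_eq_mk, Ideal.Quotient.eq_zero_iff_mem] at hπ
    have h2 : Polynomial.aeval a f ∈ A := by
      rw [hAdef, Algebra.adjoin_singleton_eq_range_aeval]
      exact ⟨f, rfl⟩
    have h3 : Polynomial.aeval a f ≠ 0 := fun h => ha ⟨f, hfm.ne_zero, h⟩
    exact hpS _ ⟨h2, h3⟩ h1
  haveI : Nontrivial (B ⧸ p) := inferInstance
  obtain ⟨Mb, hMb0, hMbp⟩ := Ring.not_isField_iff_exists_prime.mp hB2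
  haveI := hMbp
  set q2 : Ideal B := Mb.comap (Ideal.Quotient.mk p) with hq2def
  haveI hq2p : q2.IsPrime := Ideal.IsPrime.comap _
  have hpq : p < q2 := by
    refine lt_of_le_of_ne ?_ ?_
    · intro x hx
      show Ideal.Quotient.mk p x ∈ Mb
      rw [Ideal.Quotient.eq_zero_iff_mem.mpr hx]
      exact Mb.zero_mem
    · intro h
      obtain ⟨y, hy, hy0⟩ := Submodule.exists_mem_ne_zero_of_ne_bot hMb0
      obtain ⟨x, rfl⟩ := Ideal.Quotient.mk_surjective y
      have hxq : x ∈ q2 := hy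
      rw [← h] at hxq
      exact hy0 (Ideal.Quotient.eq_zero_iff_mem.mpr hxq)
  -- build a chain of primes of length 2, contradicting the dimension bound
  let c : LTSeries (PrimeSpectrum B) :=
    { length := 2
      toFun := ![⟨⊥, Ideal.bot_prime⟩, ⟨p, hpp⟩, ⟨q2, hq2p⟩]
      step := fun i => by
        fin_cases i
        · show (⟨⊥, Ideal.bot_prime⟩ : PrimeSpectrum B) < ⟨p, hpp⟩
          rw [← PrimeSpectrum.asIdeal_lt_asIdeal]
          exact bot_lt_iff_ne_bot.mpr hp0
        · show (⟨p, hpp⟩ : PrimeSpectrum B) < ⟨q2, hq2p⟩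
          rw [← PrimeSpectrum.asIdeal_lt_asIdeal]
          exact hpq }
  have h2le : (c.length : WithBot ℕ∞) ≤ ringKrullDim B := Order.LTSeries.length_le_krullDim c
  have h21 : (2 : WithBot ℕ∞) ≤ 1 := le_trans (by exact_mod_cast h2le) hdim
  norm_num at h21

end Geo

section KeyDer

variable {k B : Type*} [Field k] [CharZero k] [CommRing B] [IsDomain B] [Algebra k B]

/-- Minimal-degree derivation argument: a derivation killing a subalgebra `A` kills any
element satisfying a nonzero polynomial with coefficients in `A`. -/
theorem key_der (D : Derivation k B B) (A : Subalgebra k B) (hA : ∀ x ∈ A, D x = 0)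
    (b : B) (h : ∃ q : Polynomial B, q ≠ 0 ∧ (∀ i, q.coeff i ∈ A) ∧ q.eval b = 0) :
    D b = 0 := by
  haveI : CharZero B := aux_charZero k
  classical
  let Q : ℕ → Prop := fun n => ∃ q : Polynomial B,
    q ≠ 0 ∧ (∀ i, q.coeff i ∈ A) ∧ q.eval b = 0 ∧ q.natDegree = n
  have hQ : ∃ n, Q n := by obtain ⟨q, h1, h2, h3⟩ := h; exact ⟨q.natDegree, q, h1, h2, h3, rfl⟩
  obtain ⟨q, hq0, hqA, hqe, hqn⟩ := Nat.find_spec hQ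
  have hdeg : q.natDegree ≠ 0 := by
    intro hd
    have : q = C (q.coeff 0) := Polynomial.eq_C_of_natDegree_eq_zero hd
    rw [this] at hqe hq0
    simp only [eval_C] at hqe
    rw [hqe] at hq0
    exact hq0 (map_zero C)
  -- derivative is nonzero, smaller degree
  have hd0 : derivative q ≠ 0 := fun hd =>
    hdeg (Polynomial.natDegree_eq_zero_of_derivative_eq_zero hd)
  have hdA : ∀ i, (derivative q).coeff i ∈ A := by
    intro i
    rw [Polynomial.coeff_derivative]
    exact A.mul_mem (hqA _) (by exact_mod_cast A.natCast_mem (i+1))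
  have hdne : (derivative q).eval b ≠ 0 := by
    intro hde
    have : Q (derivative q).natDegree := ⟨derivative q, hd0, hdA, hde, rfl⟩
    exact Nat.find_min hQ (by
      calc (derivative q).natDegree < q.natDegree := Polynomial.natDegree_derivative_lt hdeg
        _ = Nat.find hQ := hqn) this
  -- the chain rule
  have := D.apply_eval_eq b q
  rw [hqe, map_zero] at this
  have hmc : D.mapCoeffs q = 0 := by
    refine PolynomialModule.ext (Finsupp.ext fun i => ?_)
    simpa [Derivation.mapCoeffs_apply] using hA _ (hqA i)
  rw [hmc, map_zero, zero_add, smul_eq_mul] at this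
  rcases mul_eq_zero.mp this.symm with h | h
  · exact absurd h hdne
  · exact h


/-- The derivation `{c, -}` attached to a Poisson bracket. -/
def PoissonStructure.der (P : PoissonStructure k B) (c : B) : Derivation k B B where

  toFun := P.bracket c
  map_add' := fun x y => by
    rw [P.antisymm c (x + y), P.add_left, P.antisymm x c, P.antisymm y c]
    ring
  map_smul' := fun r x => by
    show P.bracket c (r • x) = (RingHom.id k) r • P.bracket c x
    rw [RingHom.id_apply, P.antisymm c (r • x), P.smul_left, P.antisymm x c, smul_neg, neg_neg]
  map_one_eq_zero' := by
    show P.bracket c 1 = 0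
    have h := P.leibniz c 1 1
    rw [one_mul, mul_one, one_mul] at h
    exact (left_eq_add.mp h)
  leibniz' := fun x y => by
    show P.bracket c (x * y) = x • P.bracket c y + y • P.bracket c x
    rw [smul_eq_mul, smul_eq_mul, P.leibniz]
    ring


end KeyDer

/-- An affine Poisson integral domain of Krull dimension at most one over a field of
characteristic zero has trivial Poisson bracket. -/
theorem affine_dim_le_one_trivialBracket {k B : Type*} [Field k] [CharZero k]
    [CommRing B] [IsDomain B] [Algebra k B] [Algebra.FiniteType k B]
    (P : PoissonStructure k B)
    (hdim : ringKrullDim B ≤ 1) :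
    ∀ a b : B, P.bracket a b = 0 := by
  haveI : CharZero B := aux_charZero k
  have hself : ∀ x : B, P.bracket x x = 0 := by
    intro x
    have h := P.antisymm x x
    have h2 : (2 : B) * P.bracket x x = 0 := by linear_combination h
    rcases mul_eq_zero.mp h2 with h' | h'
    · exact absurd h' two_ne_zero
    · exact h'
  intro a b
  by_cases ha : IsAlgebraic k a
  · have hba : P.der b a = 0 := by
      refine key_der (P.der b) ⊥ ?_ a ?_
      · intro x hx
        obtain ⟨r, rfl⟩ := Algebra.mem_bot.mp hx
        exact Derivation.map_algebraMap (P.der b) r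
      · obtain ⟨f, hf0, hfe⟩ := ha
        refine ⟨f.map (algebraMap k B), ?_, ?_, ?_⟩
        · exact (Polynomial.map_ne_zero_iff (algebraMap k B).injective).mpr hf0
        · intro i
          rw [coeff_map]
          exact Subalgebra.algebraMap_mem ⊥ _
        · rw [Polynomial.eval_map, ← Polynomial.aeval_def]
          exact hfe
    have : P.bracket b a = 0 := hba
    rw [P.antisymm a b, this, neg_zero]
  · have hab : P.der a b = 0 := by
      refine key_der (P.der a) (Algebra.adjoin k {a}) ?_ b
        (exists_relation hdim a b ha)
      have h0 : Set.EqOn (⇑(P.der a)) (⇑(0 : Derivation k B B)) {a} := by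
        intro y hy
        rw [Set.mem_singleton_iff] at hy
        show P.bracket a y = (0 : Derivation k B B) y
        rw [hy, hself a]
        simp
      intro x hx
      have := Derivation.eqOn_adjoin h0 hx
      simpa using this
    exact hab
end

section
/- Let A be a Poisson algebra with trivial Poisson center Z_P(A) = k. Then A is universally Poisson cancellative: for every Poisson algebra B and every finitely generated commutative domain R over k with trivial Poisson bracket admitting a Poisson ideal I ⊂ R with R/I ≅ k, any Poisson algebra isomorphism A ⊗ R ≅ B ⊗ R implies A ≅ B as Poisson algebras. -/
namespace PoissonStructure

variable {k A : Type*} [CommRing k] [CommRing A] [Algebra k A] (P : PoissonStructure k A)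

lemma add_right (a b c : A) : P.bracket a (b + c) = P.bracket a b + P.bracket a c := by
  rw [P.antisymm a (b+c), P.add_left, P.antisymm b a, P.antisymm c a]; ring

lemma smul_right (r : k) (a b : A) : P.bracket a (r • b) = r • P.bracket a b := by
  rw [P.antisymm a (r • b), P.smul_left, P.antisymm b a, smul_neg, neg_neg]

/-- The bracket as a bilinear map. -/
noncomputable def blin : A →ₗ[k] A →ₗ[k] A :=
  LinearMap.mk₂ k P.bracket P.add_left P.smul_left P.add_right P.smul_right

@[simp] lemma blin_apply (a b : A) : P.blin a b = P.bracket a b := rfl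

lemma bracket_one_right (a : A) : P.bracket a 1 = 0 := by
  have h := P.leibniz a 1 1
  rw [mul_one, one_mul, mul_one] at h
  exact (left_eq_add.mp h)

lemma bracket_one_left (a : A) : P.bracket 1 a = 0 := by
  rw [P.antisymm, P.bracket_one_right, neg_zero]

lemma bracket_zero_left (a : A) : P.bracket 0 a = 0 := by
  have h : P.blin 0 a = 0 := by rw [map_zero]; rfl
  rw [← P.blin_apply]; exact h

lemma bracket_zero_right (a : A) : P.bracket a 0 = 0 := (P.blin a).map_zero

lemma central_mul {z w : A} (hz : ∀ b, P.bracket z b = 0) (hw : ∀ b, P.bracket w b = 0)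
    (b : A) : P.bracket (z * w) b = 0 := by
  rw [P.antisymm, P.leibniz, P.antisymm b z, P.antisymm b w, hz, hw]; ring

end PoissonStructure

open TensorProduct

theorem central_mem_span {k A R : Type*} [Field k] [CommRing A] [Algebra k A]
    [CommRing R] [Algebra k R]
    (P : PoissonStructure k A) (PT : PoissonStructure k (A ⊗[k] R))
    (hPT : ∀ (a a' : A) (r r' : R),
      PT.bracket (a ⊗ₜ[k] r) (a' ⊗ₜ[k] r') = (P.bracket a a') ⊗ₜ[k] (r * r'))
    (x : A ⊗[k] R) (hx : ∀ a : A, PT.bracket x (a ⊗ₜ[k] (1:R)) = 0) :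
    x ∈ Submodule.span k
      {u : A ⊗[k] R | ∃ z r, (∀ a, P.bracket z a = 0) ∧ u = z ⊗ₜ[k] r} := by
  classical
  set b := Module.Basis.ofVectorSpace k R with hb
  let E : (A ⊗[k] R) ≃ₗ[k] (Module.Basis.ofVectorSpaceIndex k R →₀ A) :=
    (TensorProduct.congr (LinearEquiv.refl k A) b.repr).trans
      (TensorProduct.finsuppScalarRight k k A _)
  have hE : ∀ (a : A) (r : R) i, E (a ⊗ₜ[k] r) i = b.repr r i • a := by
    intro a r i
    simp only [E, LinearEquiv.trans_apply, TensorProduct.congr_tmul, LinearEquiv.refl_apply,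
      TensorProduct.finsuppScalarRight_apply_tmul_apply]
  have hcomp : ∀ i a, P.bracket (E x i) a = 0 := by
    intro i a
    let D : A →ₗ[k] A := P.blin.flip a
    let L : (A ⊗[k] R) →ₗ[k] (A ⊗[k] R) := PT.blin.flip (a ⊗ₜ[k] (1:R))
    have hL : L = LinearMap.rTensor R D := by
      apply TensorProduct.ext'
      intro a' r
      show PT.bracket (a' ⊗ₜ[k] r) (a ⊗ₜ[k] 1) = (P.bracket a' a) ⊗ₜ[k] r
      rw [hPT, mul_one]
    have hnat : ∀ (y : A ⊗[k] R) i, E (LinearMap.rTensor R D y) i = D (E y i) := by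
      intro y
      induction y using TensorProduct.induction_on with
      | zero => intro i; simp
      | tmul a' r => intro i; rw [LinearMap.rTensor_tmul, hE, hE, map_smul]
      | add u v hu hv => intro i; simp only [map_add, Finsupp.add_apply, hu, hv]
    have h0 : L x = 0 := hx a
    have h1 : D (E x i) = 0 := by
      rw [← hnat x i, ← hL, h0, map_zero]; rfl
    exact h1
  have hxe : x = (E x).sum fun i z => z ⊗ₜ[k] (b i : R) := by
    conv_lhs => rw [← E.symm_apply_apply x, ← Finsupp.sum_single (E x), map_finsuppSum]
    apply Finsupp.sum_congr
    intro i _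
    show E.symm (Finsupp.single i ((E x) i)) = _
    simp only [E, LinearEquiv.trans_symm, LinearEquiv.trans_apply,
      TensorProduct.finsuppScalarRight_symm_apply_single, TensorProduct.congr_symm_tmul,
      LinearEquiv.refl_symm, LinearEquiv.refl_apply, Module.Basis.repr_symm_single_one]
  rw [hxe]
  refine Submodule.sum_mem _ fun i _ => Submodule.subset_span ?_
  exact ⟨E x i, b i, fun a => hcomp i a, rfl⟩

theorem surj_ringEnd_injective {R : Type*} [CommRing R] [IsNoetherianRing R]
    (σ : R →+* R) (hs : Function.Surjective σ) : Function.Injective σ := by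
  have hmono : Monotone fun n : ℕ => RingHom.ker (σ ^ n) := by
    apply monotone_nat_of_le_succ
    intro n x hx
    have hx' : (σ ^ n) x = 0 := hx
    show (σ ^ (n+1)) x = 0
    rw [pow_succ']
    show σ ((σ ^ n) x) = 0
    rw [hx', map_zero]
  have hsn : ∀ n : ℕ, Function.Surjective (σ ^ n) := by
    intro n
    induction n with
    | zero => simpa using Function.surjective_id
    | succ n ih =>
      rw [pow_succ']
      exact (hs.comp ih)
  obtain ⟨N, hN⟩ := monotone_stabilizes_iff_noetherian.mpr
    (isNoetherianRing_iff.mp ‹_›) ⟨fun n : ℕ => RingHom.ker (σ ^ n), hmono⟩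
  have heq : RingHom.ker (σ ^ N) = RingHom.ker (σ ^ (N+1)) := hN (N+1) (Nat.le_succ N)
  intro x y hxy
  have h0 : σ (x - y) = 0 := by rw [map_sub, hxy, sub_self]
  obtain ⟨z, hz⟩ := hsn N (x - y)
  have hz1 : (σ ^ (N + 1)) z = 0 := by
    rw [pow_succ']
    show σ ((σ ^ N) z) = 0
    rw [hz, h0]
  have hz2 : z ∈ RingHom.ker (σ ^ N) := by
    rw [heq]; exact hz1
  have : x - y = 0 := by rw [← hz]; exact hz2
  exact sub_eq_zero.mp this
set_option maxHeartbeats 2000000 in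
open TensorProduct in
/-- A Poisson algebra with trivial Poisson center is universally Poisson cancellative. -/
theorem trivialCenter_universallyPoissonCancellative {k A : Type*} [Field k]
    [CommRing A] [Algebra k A]
    (P : PoissonStructure k A)
    (hcenter : ∀ z : A, (∀ a, P.bracket z a = 0) → ∃ c : k, z = algebraMap k A c) :
    ∀ (B : Type*) [CommRing B] [Algebra k B] (Q : PoissonStructure k B)
      (R : Type*) [CommRing R] [IsDomain R] [Algebra k R],
      Algebra.FiniteType k R →
      ∀ I : Ideal R, Function.Bijective (algebraMap k (R ⧸ I)) →
      ∀ (PT : PoissonStructure k (A ⊗[k] R)) (QT : PoissonStructure k (B ⊗[k] R)),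
        (∀ (a a' : A) (r r' : R),
          PT.bracket (a ⊗ₜ[k] r) (a' ⊗ₜ[k] r') = (P.bracket a a') ⊗ₜ[k] (r * r')) →
        (∀ (b b' : B) (r r' : R),
          QT.bracket (b ⊗ₜ[k] r) (b' ⊗ₜ[k] r') = (Q.bracket b b') ⊗ₜ[k] (r * r')) →
        (∃ e : (A ⊗[k] R) ≃ₐ[k] (B ⊗[k] R),
          ∀ x y, e (PT.bracket x y) = QT.bracket (e x) (e y)) →
        ∃ f : A ≃ₐ[k] B, ∀ x y, f (P.bracket x y) = Q.bracket (f x) (f y) := by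
  intro B _ _ Q R _ _ _ hFT I hI PT QT hPT hQT he0
  obtain ⟨e, he⟩ := he0
  classical
  -- the character of R coming from I
  have hqe : Function.Bijective (Algebra.ofId k (R ⧸ I)) := hI
  let qe : k ≃ₐ[k] (R ⧸ I) := AlgEquiv.ofBijective (Algebra.ofId k (R ⧸ I)) hqe
  let ε : R →ₐ[k] k := (qe.symm : (R ⧸ I) →ₐ[k] k).comp (Ideal.Quotient.mkₐ k I)
  -- the projection B ⊗ R → B
  let πB : (B ⊗[k] R) →ₐ[k] B :=
    Algebra.TensorProduct.productMap (AlgHom.id k B) ((Algebra.ofId k B).comp ε)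
  have hπB : ∀ (b : B) (r : R), πB (b ⊗ₜ[k] r) = ε r • b := by
    intro b r
    show (AlgHom.id k B) b * (Algebra.ofId k B) (ε r) = ε r • b
    rw [AlgHom.id_apply, Algebra.ofId_apply, Algebra.smul_def, mul_comm]
  have hε1 : ε 1 = 1 := map_one ε
  -- Poisson property of πB
  have hπBP : ∀ x y, πB (QT.bracket x y) = Q.bracket (πB x) (πB y) := by
    intro x y
    induction x using TensorProduct.induction_on with
    | zero => rw [QT.bracket_zero_left, map_zero, Q.bracket_zero_left]
    | tmul b r =>
      induction y using TensorProduct.induction_on with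
      | zero => rw [QT.bracket_zero_right, map_zero, Q.bracket_zero_right]
      | tmul b' r' =>
        rw [hQT, hπB, hπB, hπB, map_mul, Q.smul_left, Q.smul_right, smul_smul]
      | add u v hu hv =>
        rw [QT.add_right, map_add, map_add, hu, hv, Q.add_right]
    | add u v hu hv =>
      rw [QT.add_left, map_add, map_add, hu, hv, Q.add_left]
  -- dispose of the degenerate case where A is the zero ring
  by_cases hA1 : (1 : A) = 0
  · -- then B ⊗ R is trivial, hence B is trivial
    have h1t : (1 : A ⊗[k] R) = 0 := by
      have : (1 : A ⊗[k] R) = (1:A) ⊗ₜ[k] (1:R) := rfl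
      rw [this, hA1, TensorProduct.zero_tmul]
    have h1BR : (1 : B ⊗[k] R) = 0 := by
      have : (1 : B ⊗[k] R) = e 1 := (map_one e).symm
      rw [this, h1t, map_zero]
    have hB0 : ∀ b : B, b = 0 := by
      intro b
      have : b ⊗ₜ[k] (1:R) = 0 := by
        calc b ⊗ₜ[k] (1:R) = (b ⊗ₜ[k] (1:R)) * 1 := (mul_one _).symm
        _ = (b ⊗ₜ[k] (1:R)) * 0 := by rw [h1BR]
        _ = 0 := mul_zero _
      have hb := hπB b 1
      rw [this, map_zero] at hb
      rw [hε1, one_smul] at hb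
      exact hb.symm
    have hA0 : ∀ a : A, a = 0 := by
      intro a
      calc a = a * 1 := (mul_one a).symm
      _ = a * 0 := by rw [hA1]
      _ = 0 := mul_zero a
    refine ⟨AlgEquiv.ofAlgHom
      ⟨⟨⟨⟨fun _ => 0, ?_⟩, ?_⟩, ?_, ?_⟩, ?_⟩
      ⟨⟨⟨⟨fun _ => 0, ?_⟩, ?_⟩, ?_, ?_⟩, ?_⟩ ?_ ?_, ?_⟩
    · exact (hB0 1).symm
    · intro x y; exact ((hB0 _).trans (hB0 _).symm)
    · exact rfl
    · intro x y; exact ((hB0 _).trans (hB0 _).symm)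
    · intro c; exact (hB0 _).symm
    · exact (hA0 1).symm
    · intro x y; exact ((hA0 _).trans (hA0 _).symm)
    · exact rfl
    · intro x y; exact ((hA0 _).trans (hA0 _).symm)
    · intro c; exact (hA0 _).symm
    · apply AlgHom.ext; intro b; exact ((hB0 _).trans (hB0 b).symm)
    · apply AlgHom.ext; intro a; exact ((hA0 _).trans (hA0 a).symm)
    · intro x y
      exact ((hB0 _).trans (hB0 _).symm)
  -- now A is nontrivial
  haveI : Nontrivial A := nontrivial_of_ne 1 0 hA1
  -- injectivity of r ↦ 1 ⊗ r
  have injA : Function.Injective (fun r : R => (1:A) ⊗ₜ[k] r) := by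
    have h1 : Function.Injective (Algebra.linearMap k A) := by
      have := (algebraMap k A).injective
      exact this
    have h2 : Function.Injective (LinearMap.rTensor R (Algebra.linearMap k A)) :=
      Module.Flat.rTensor_preserves_injective_linearMap _ h1
    intro r r' h
    have h3 : (LinearMap.rTensor R (Algebra.linearMap k A)) ((TensorProduct.lid k R).symm r)
        = (LinearMap.rTensor R (Algebra.linearMap k A)) ((TensorProduct.lid k R).symm r') := by
      simp only [TensorProduct.lid_symm_apply, LinearMap.rTensor_tmul, Algebra.linearMap_apply,
        map_one]
      exact h
    exact (TensorProduct.lid k R).symm.injective (h2 h3)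
  -- B is nontrivial
  have hB1 : (1 : B) ≠ 0 := by
    intro hB1
    have h1BR : (1 : B ⊗[k] R) = 0 := by
      have : (1 : B ⊗[k] R) = (1:B) ⊗ₜ[k] (1:R) := rfl
      rw [this, hB1, TensorProduct.zero_tmul]
    have h1t : (1 : A ⊗[k] R) = 0 := by
      have : (1 : A ⊗[k] R) = e.symm 1 := by rw [map_one]
      rw [this, h1BR, map_zero]
    have : (1:A) ⊗ₜ[k] (1:R) = (1:A) ⊗ₜ[k] (0:R) := by
      rw [TensorProduct.tmul_zero]
      exact h1t
    exact one_ne_zero (injA this)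
  haveI : Nontrivial B := nontrivial_of_ne 1 0 hB1
  have injB : Function.Injective (fun s : R => (1:B) ⊗ₜ[k] s) := by
    have h1 : Function.Injective (Algebra.linearMap k B) := (algebraMap k B).injective
    have h2 : Function.Injective (LinearMap.rTensor R (Algebra.linearMap k B)) :=
      Module.Flat.rTensor_preserves_injective_linearMap _ h1
    intro r r' h
    have h3 : (LinearMap.rTensor R (Algebra.linearMap k B)) ((TensorProduct.lid k R).symm r)
        = (LinearMap.rTensor R (Algebra.linearMap k B)) ((TensorProduct.lid k R).symm r') := by
      simp only [TensorProduct.lid_symm_apply, LinearMap.rTensor_tmul, Algebra.linearMap_apply,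
        map_one]
      exact h
    exact (TensorProduct.lid k R).symm.injective (h2 h3)
  -- e.symm is a Poisson map
  have he' : ∀ x y, e.symm (QT.bracket x y) = PT.bracket (e.symm x) (e.symm y) := by
    intro x y
    apply e.injective
    rw [he, e.apply_symm_apply, e.apply_symm_apply, e.apply_symm_apply]
  -- 1 ⊗ r is Poisson-central in A ⊗ R
  have hcenAR : ∀ (r : R) (y : A ⊗[k] R), PT.bracket ((1:A) ⊗ₜ[k] r) y = 0 := by
    intro r y
    induction y using TensorProduct.induction_on with
    | zero => exact PT.bracket_zero_right _
    | tmul a' r' => rw [hPT, P.bracket_one_left, TensorProduct.zero_tmul]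
    | add u v hu hv => rw [PT.add_right, hu, hv, add_zero]
  have hcenBR : ∀ (s : R) (y : B ⊗[k] R), QT.bracket ((1:B) ⊗ₜ[k] s) y = 0 := by
    intro s y
    induction y using TensorProduct.induction_on with
    | zero => exact QT.bracket_zero_right _
    | tmul b' r' => rw [hQT, Q.bracket_one_left, TensorProduct.zero_tmul]
    | add u v hu hv => rw [QT.add_right, hu, hv, add_zero]
  -- central elements of B, tensored with 1, are central in B ⊗ R
  have hBcenZ : ∀ (z : B), (∀ w, Q.bracket z w = 0) →
      ∀ (y : B ⊗[k] R), QT.bracket (z ⊗ₜ[k] (1:R)) y = 0 := by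
    intro z hz y
    induction y using TensorProduct.induction_on with
    | zero => exact QT.bracket_zero_right _
    | tmul b' r' => rw [hQT, hz, TensorProduct.zero_tmul]
    | add u v hu hv => rw [QT.add_right, hu, hv, add_zero]
  -- fully central elements of A ⊗ R are of the form 1 ⊗ r
  have hAcen : ∀ x : A ⊗[k] R, (∀ a : A, PT.bracket x (a ⊗ₜ[k] (1:R)) = 0) →
      ∃ r : R, x = (1:A) ⊗ₜ[k] r := by
    intro x hx
    have hsp := central_mem_span P PT hPT x hx
    have hle : Submodule.span k
        {u : A ⊗[k] R | ∃ z r, (∀ a, P.bracket z a = 0) ∧ u = z ⊗ₜ[k] r}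
        ≤ LinearMap.range ((TensorProduct.mk k A R) 1) := by
      rw [Submodule.span_le]
      rintro u ⟨z, r, hz, rfl⟩
      obtain ⟨c, rfl⟩ := hcenter z hz
      refine ⟨c • r, ?_⟩
      show (1:A) ⊗ₜ[k] (c • r) = _
      rw [TensorProduct.tmul_smul, TensorProduct.smul_tmul', Algebra.algebraMap_eq_smul_one]
    obtain ⟨r, hr⟩ := hle hsp
    exact ⟨r, hr.symm⟩
  -- the Poisson-central elements of B form a submodule
  let Tsub : Submodule k B :=
    { carrier := {z : B | ∀ w, Q.bracket z w = 0}
      add_mem' := by intro a b ha hb w; rw [Q.add_left, ha w, hb w, add_zero]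
      zero_mem' := fun w => Q.bracket_zero_left w
      smul_mem' := by intro c a ha w; rw [Q.smul_left, ha w, smul_zero] }
  have hθex : ∀ z : Tsub, ∃ r : R, e.symm ((z : B) ⊗ₜ[k] (1:R)) = (1:A) ⊗ₜ[k] r := by
    intro z
    apply hAcen
    intro a
    have h1 : (a ⊗ₜ[k] (1:R)) = e.symm (e (a ⊗ₜ[k] (1:R))) := (e.symm_apply_apply _).symm
    rw [h1, ← he', hBcenZ (z:B) z.2, map_zero]
  choose θ hθ using hθex
  have hθadd : ∀ z z' : Tsub, θ (z + z') = θ z + θ z' := by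
    intro z z'
    apply injA
    show (1:A) ⊗ₜ[k] θ (z+z') = (1:A) ⊗ₜ[k] (θ z + θ z')
    rw [TensorProduct.tmul_add, ← hθ, ← hθ, ← hθ,
      show ((z + z' : Tsub) : B) ⊗ₜ[k] (1:R) = (z:B) ⊗ₜ[k] (1:R) + (z':B) ⊗ₜ[k] (1:R) by
        rw [Submodule.coe_add, TensorProduct.add_tmul],
      map_add]
  have hθsmul : ∀ (c : k) (z : Tsub), θ (c • z) = c • θ z := by
    intro c z
    apply injA
    show (1:A) ⊗ₜ[k] θ (c • z) = (1:A) ⊗ₜ[k] (c • θ z)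
    rw [TensorProduct.tmul_smul, ← hθ, ← hθ,
      show ((c • z : Tsub) : B) ⊗ₜ[k] (1:R) = c • ((z:B) ⊗ₜ[k] (1:R)) by
        rw [Submodule.coe_smul, TensorProduct.smul_tmul'],
      map_smul]
  let θl : Tsub →ₗ[k] R := ⟨⟨θ, hθadd⟩, fun c z => hθsmul c z⟩
  obtain ⟨lam, hlamc⟩ := LinearMap.exists_extend (ε.toLinearMap ∘ₗ θl)
  have hlam : ∀ z : Tsub, lam (z : B) = ε (θ z) := by
    intro z
    exact LinearMap.congr_fun hlamc z
  -- the linear projection B ⊗ R → R induced by lam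
  let pt : (B ⊗[k] R) →ₗ[k] R :=
    (TensorProduct.lid k R).toLinearMap ∘ₗ (TensorProduct.map lam LinearMap.id)
  have hpt : ∀ (b : B) (r : R), pt (b ⊗ₜ[k] r) = lam b • r := by
    intro b r
    show (TensorProduct.lid k R) (TensorProduct.map lam LinearMap.id (b ⊗ₜ[k] r)) = lam b • r
    rw [TensorProduct.map_tmul, TensorProduct.lid_tmul]
    rfl
  have hθmul : ∀ (z z' : Tsub) (hzz' : (z:B)*(z':B) ∈ Tsub),
      θ ⟨(z:B)*(z':B), hzz'⟩ = θ z * θ z' := by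
    intro z z' hzz'
    apply injA
    show (1:A) ⊗ₜ[k] θ ⟨(z:B)*(z':B), hzz'⟩ = (1:A) ⊗ₜ[k] (θ z * θ z')
    rw [← hθ,
      show ((⟨(z:B)*(z':B), hzz'⟩ : Tsub) : B) ⊗ₜ[k] (1:R)
          = ((z:B) ⊗ₜ[k] (1:R)) * ((z':B) ⊗ₜ[k] (1:R)) by
        rw [Algebra.TensorProduct.tmul_mul_tmul, mul_one],
      map_mul, hθ, hθ, Algebra.TensorProduct.tmul_mul_tmul, one_mul]
  have hlammul : ∀ z z' : B, (∀ w, Q.bracket z w = 0) → (∀ w, Q.bracket z' w = 0) →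
      lam (z * z') = lam z * lam z' := by
    intro z z' hz hz'
    have hzz' : z * z' ∈ Tsub := fun w => Q.central_mul hz hz' w
    have h1 : lam (z*z') = ε (θ ⟨z*z', hzz'⟩) := hlam ⟨z*z', hzz'⟩
    rw [h1, hθmul ⟨z,hz⟩ ⟨z',hz'⟩ hzz', map_mul, hlam ⟨z,hz⟩, hlam ⟨z',hz'⟩]
  have h1T : (1:B) ∈ Tsub := fun w => Q.bracket_one_left w
  have hθ1 : θ ⟨1, h1T⟩ = 1 := by
    apply injA
    show (1:A) ⊗ₜ[k] θ ⟨1, h1T⟩ = (1:A) ⊗ₜ[k] (1:R)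
    rw [← hθ]
    show e.symm ((1:B) ⊗ₜ[k] (1:R)) = (1:A) ⊗ₜ[k] (1:R)
    rw [show ((1:B) ⊗ₜ[k] (1:R)) = (1 : B ⊗[k] R) from rfl, map_one]
    rfl
  have hlam1 : lam (1:B) = 1 := by
    have h := hlam ⟨1, h1T⟩
    rw [hθ1] at h
    rw [show ((⟨1, h1T⟩ : Tsub) : B) = (1:B) from rfl] at h
    rw [h, map_one ε]
  -- multiplicativity of pt on the span of central pure tensors
  have hmemM : ∀ r : R, e ((1:A) ⊗ₜ[k] r) ∈ Submodule.span k
      {u : B ⊗[k] R | ∃ z s, (∀ w, Q.bracket z w = 0) ∧ u = z ⊗ₜ[k] s} := by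
    intro r
    apply central_mem_span Q QT hQT
    intro b
    have h1 : (b ⊗ₜ[k] (1:R)) = e (e.symm (b ⊗ₜ[k] (1:R))) := (e.apply_symm_apply _).symm
    rw [h1, ← he, hcenAR, map_zero]
  have hpmul : ∀ x ∈ Submodule.span k
      {u : B ⊗[k] R | ∃ z s, (∀ w, Q.bracket z w = 0) ∧ u = z ⊗ₜ[k] s},
      ∀ y ∈ Submodule.span k
      {u : B ⊗[k] R | ∃ z s, (∀ w, Q.bracket z w = 0) ∧ u = z ⊗ₜ[k] s},
      pt (x * y) = pt x * pt y := by
    intro x hx y hy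
    induction hx, hy using Submodule.span_induction₂ with
    | mem_mem x y hx hy =>
      obtain ⟨z, s, hz, rfl⟩ := hx
      obtain ⟨z', s', hz', rfl⟩ := hy
      rw [Algebra.TensorProduct.tmul_mul_tmul, hpt, hpt, hpt, hlammul z z' hz hz',
        smul_mul_smul_comm]
    | zero_left y hy => rw [zero_mul, map_zero, zero_mul]
    | zero_right x hx => rw [mul_zero, map_zero, mul_zero]
    | add_left x y z hx hy hz ih1 ih2 => rw [add_mul, map_add, ih1, ih2, map_add, add_mul]
    | add_right x y z hx hy hz ih1 ih2 => rw [mul_add, map_add, ih1, ih2, map_add, mul_add]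
    | smul_left c x y hx hy ih => rw [smul_mul_assoc, map_smul, map_smul, ih, smul_mul_assoc]
    | smul_right c x y hx hy ih => rw [mul_smul_comm, map_smul, map_smul, ih, mul_smul_comm]
  -- the ring endomorphism of R
  let σ : R →+* R :=
    { toFun := fun r => pt (e ((1:A) ⊗ₜ[k] r))
      map_one' := by
        show pt (e ((1:A) ⊗ₜ[k] (1:R))) = 1
        rw [show ((1:A) ⊗ₜ[k] (1:R)) = (1 : A ⊗[k] R) from rfl, map_one,
          show (1 : B ⊗[k] R) = (1:B) ⊗ₜ[k] (1:R) from rfl, hpt, hlam1, one_smul]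
      map_mul' := by
        intro r r'
        show pt (e ((1:A) ⊗ₜ[k] (r * r'))) = _
        rw [show (1:A) ⊗ₜ[k] (r*r') = ((1:A) ⊗ₜ[k] r) * ((1:A) ⊗ₜ[k] r') by
            rw [Algebra.TensorProduct.tmul_mul_tmul, one_mul],
          map_mul]
        exact hpmul _ (hmemM r) _ (hmemM r')
      map_zero' := by
        show pt (e ((1:A) ⊗ₜ[k] (0:R))) = 0
        rw [TensorProduct.tmul_zero, map_zero, map_zero]
      map_add' := by
        intro r r'
        show pt (e ((1:A) ⊗ₜ[k] (r + r'))) = _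
        rw [TensorProduct.tmul_add, map_add, map_add] }
  have hτex : ∀ s : R, ∃ r : R, e.symm ((1:B) ⊗ₜ[k] s) = (1:A) ⊗ₜ[k] r := by
    intro s
    apply hAcen
    intro a
    have h1 : (a ⊗ₜ[k] (1:R)) = e.symm (e (a ⊗ₜ[k] (1:R))) := (e.symm_apply_apply _).symm
    rw [h1, ← he', hcenBR, map_zero]
  choose τ hτ using hτex
  have hστ : ∀ s, σ (τ s) = s := by
    intro s
    show pt (e ((1:A) ⊗ₜ[k] τ s)) = s
    rw [← hτ, e.apply_symm_apply, hpt, hlam1, one_smul]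
  have hσsurj : Function.Surjective σ := fun s => ⟨τ s, hστ s⟩
  haveI : IsNoetherianRing R := by
    haveI := hFT
    exact Algebra.FiniteType.isNoetherianRing k R
  -- triviality of the Poisson centre of B
  have hTriv : ∀ z : B, (∀ w, Q.bracket z w = 0) → ∃ c : k, z = algebraMap k B c := by
    intro z hz
    by_contra hcon
    push_neg at hcon
    have hr0 : e.symm (z ⊗ₜ[k] (1:R)) = (1:A) ⊗ₜ[k] θ ⟨z, hz⟩ := hθ ⟨z, hz⟩
    set c0 : k := ε (θ ⟨z, hz⟩) with hc0
    have hσr0 : σ (θ ⟨z, hz⟩) = algebraMap k R c0 := by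
      show pt (e ((1:A) ⊗ₜ[k] θ ⟨z, hz⟩)) = _
      rw [← hr0, e.apply_symm_apply, hpt, hlam ⟨z, hz⟩, Algebra.algebraMap_eq_smul_one, ← hc0]
    have hσc : σ (algebraMap k R c0) = algebraMap k R c0 := by
      show pt (e ((1:A) ⊗ₜ[k] algebraMap k R c0)) = _
      rw [show (1:A) ⊗ₜ[k] (algebraMap k R c0) = c0 • (1 : A ⊗[k] R) by
          rw [Algebra.algebraMap_eq_smul_one, TensorProduct.tmul_smul]; rfl,
        map_smul, map_smul, map_one, show (1 : B ⊗[k] R) = (1:B) ⊗ₜ[k] (1:R) from rfl,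
        hpt, hlam1, one_smul, Algebra.algebraMap_eq_smul_one]
    have hv0 : σ (θ ⟨z, hz⟩ - algebraMap k R c0) = 0 := by
      rw [map_sub, hσr0, hσc, sub_self]
    have hvne : θ ⟨z, hz⟩ - algebraMap k R c0 ≠ 0 := by
      intro h
      have h2 : θ ⟨z, hz⟩ = algebraMap k R c0 := by rwa [sub_eq_zero] at h
      have h3 : z ⊗ₜ[k] (1:R) = (algebraMap k B c0) ⊗ₜ[k] (1:R) := by
        have h5 : z ⊗ₜ[k] (1:R) = e ((1:A) ⊗ₜ[k] θ ⟨z, hz⟩) := by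
          rw [← hr0, e.apply_symm_apply]
        rw [h2] at h5
        rw [show (1:A) ⊗ₜ[k] (algebraMap k R c0) = c0 • (1 : A ⊗[k] R) by
            rw [Algebra.algebraMap_eq_smul_one, TensorProduct.tmul_smul]; rfl,
          map_smul, map_one] at h5
        rw [h5]
        show c0 • (1 : B ⊗[k] R) = _
        rw [show (1 : B ⊗[k] R) = (1:B) ⊗ₜ[k] (1:R) from rfl, TensorProduct.smul_tmul',
          Algebra.algebraMap_eq_smul_one]
      have h6 : z = algebraMap k B c0 := by
        have h7 := congrArg πB h3
        rwa [hπB, hπB, hε1, one_smul, one_smul] at h7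
      exact hcon c0 h6
    exact hvne (surj_ringEnd_injective σ hσsurj (by rw [hv0, map_zero]))
  -- now fully central elements of B ⊗ R are of the form 1 ⊗ s
  have hBcen : ∀ x : B ⊗[k] R, (∀ b : B, QT.bracket x (b ⊗ₜ[k] (1:R)) = 0) →
      ∃ s : R, x = (1:B) ⊗ₜ[k] s := by
    intro x hx
    have hsp := central_mem_span Q QT hQT x hx
    have hle : Submodule.span k
        {u : B ⊗[k] R | ∃ z s, (∀ w, Q.bracket z w = 0) ∧ u = z ⊗ₜ[k] s}
        ≤ LinearMap.range ((TensorProduct.mk k B R) 1) := by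
      rw [Submodule.span_le]
      rintro u ⟨z, s, hz, rfl⟩
      obtain ⟨c, rfl⟩ := hTriv z hz
      refine ⟨c • s, ?_⟩
      show (1:B) ⊗ₜ[k] (c • s) = _
      rw [TensorProduct.tmul_smul, TensorProduct.smul_tmul', Algebra.algebraMap_eq_smul_one]
    obtain ⟨s, hs⟩ := hle hsp
    exact ⟨s, hs.symm⟩
  have hgex : ∀ r : R, ∃ s : R, e ((1:A) ⊗ₜ[k] r) = (1:B) ⊗ₜ[k] s := by
    intro r
    apply hBcen
    intro b
    have h1 : (b ⊗ₜ[k] (1:R)) = e (e.symm (b ⊗ₜ[k] (1:R))) := (e.apply_symm_apply _).symm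
    rw [h1, ← he, hcenAR, map_zero]
  choose g hg using hgex
  have hgτ : ∀ s, g (τ s) = s := by
    intro s
    apply injB
    show (1:B) ⊗ₜ[k] g (τ s) = (1:B) ⊗ₜ[k] s
    rw [← hg, ← hτ, e.apply_symm_apply]
  have hg1 : g 1 = 1 := by
    apply injB
    show (1:B) ⊗ₜ[k] g 1 = (1:B) ⊗ₜ[k] (1:R)
    rw [← hg, show ((1:A) ⊗ₜ[k] (1:R)) = (1 : A ⊗[k] R) from rfl, map_one]
    rfl
  -- bundle g as an algebra homomorphism
  let gA : R →ₐ[k] R :=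
    { toFun := g
      map_one' := hg1
      map_mul' := by
        intro r r'
        apply injB
        show (1:B) ⊗ₜ[k] g (r * r') = (1:B) ⊗ₜ[k] (g r * g r')
        rw [← hg, show (1:A) ⊗ₜ[k] (r * r') = ((1:A) ⊗ₜ[k] r) * ((1:A) ⊗ₜ[k] r') by
            rw [Algebra.TensorProduct.tmul_mul_tmul, one_mul],
          map_mul, hg, hg, Algebra.TensorProduct.tmul_mul_tmul, one_mul]
      map_zero' := by
        apply injB
        show (1:B) ⊗ₜ[k] g 0 = (1:B) ⊗ₜ[k] (0:R)
        rw [← hg, TensorProduct.tmul_zero, map_zero, TensorProduct.tmul_zero]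
      map_add' := by
        intro r r'
        apply injB
        show (1:B) ⊗ₜ[k] g (r + r') = (1:B) ⊗ₜ[k] (g r + g r')
        rw [← hg, TensorProduct.tmul_add, map_add, hg, hg, TensorProduct.tmul_add]
      commutes' := by
        intro c
        apply injB
        show (1:B) ⊗ₜ[k] g (algebraMap k R c) = (1:B) ⊗ₜ[k] (algebraMap k R c)
        rw [← hg, show (1:A) ⊗ₜ[k] (algebraMap k R c) = c • (1 : A ⊗[k] R) by
            rw [Algebra.algebraMap_eq_smul_one, TensorProduct.tmul_smul]; rfl,
          map_smul, map_one]
        show c • ((1:B) ⊗ₜ[k] (1:R)) = _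
        rw [← TensorProduct.tmul_smul, ← Algebra.algebraMap_eq_smul_one] }
  let χA : R →ₐ[k] k := ε.comp gA
  let πA : (A ⊗[k] R) →ₐ[k] A :=
    Algebra.TensorProduct.productMap (AlgHom.id k A) ((Algebra.ofId k A).comp χA)
  have hπA : ∀ (a : A) (r : R), πA (a ⊗ₜ[k] r) = ε (g r) • a := by
    intro a r
    show (AlgHom.id k A) a * (Algebra.ofId k A) (χA r) = ε (g r) • a
    rw [AlgHom.id_apply, Algebra.ofId_apply, Algebra.smul_def, mul_comm]
    rfl
  let F : A →ₐ[k] B :=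
    πB.comp ((e : (A ⊗[k] R) →ₐ[k] (B ⊗[k] R)).comp Algebra.TensorProduct.includeLeft)
  let G : B →ₐ[k] A :=
    πA.comp ((e.symm : (B ⊗[k] R) →ₐ[k] (A ⊗[k] R)).comp Algebra.TensorProduct.includeLeft)
  have hFa : ∀ a : A, F a = πB (e (a ⊗ₜ[k] (1:R))) := fun a => rfl
  have hGb : ∀ b : B, G b = πA (e.symm (b ⊗ₜ[k] (1:R))) := fun b => rfl
  let H : (B ⊗[k] R) →ₐ[k] A := πA.comp (e.symm : (B ⊗[k] R) →ₐ[k] (A ⊗[k] R))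
  have hHx : ∀ x, H x = πA (e.symm x) := fun x => rfl
  have hH1r : ∀ r : R, H ((1:B) ⊗ₜ[k] r) = algebraMap k A (ε r) := by
    intro r
    rw [hHx, hτ r, hπA, hgτ, Algebra.algebraMap_eq_smul_one]
  have claim1 : ∀ x : B ⊗[k] R, H ((πB x) ⊗ₜ[k] (1:R)) = H x := by
    intro x
    induction x using TensorProduct.induction_on with
    | zero => rw [map_zero, TensorProduct.zero_tmul, map_zero]
    | tmul b r =>
      rw [hπB]
      have hsplit : b ⊗ₜ[k] r = (b ⊗ₜ[k] (1:R)) * ((1:B) ⊗ₜ[k] r) := by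
        rw [Algebra.TensorProduct.tmul_mul_tmul, mul_one, one_mul]
      rw [← TensorProduct.smul_tmul', map_smul, hsplit, map_mul, hH1r,
        Algebra.smul_def, mul_comm]
    | add u v hu hv => rw [map_add, TensorProduct.add_tmul, map_add, hu, hv, map_add]
  have hGF : ∀ a : A, G (F a) = a := by
    intro a
    have h1 : G (F a) = H ((πB (e (a ⊗ₜ[k] (1:R)))) ⊗ₜ[k] (1:R)) := rfl
    rw [h1, claim1, hHx, e.symm_apply_apply, hπA, hg1, map_one, one_smul]
  let K : (A ⊗[k] R) →ₐ[k] B := πB.comp (e : (A ⊗[k] R) →ₐ[k] (B ⊗[k] R))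
  have hKx : ∀ x, K x = πB (e x) := fun x => rfl
  have hK1r : ∀ r : R, K ((1:A) ⊗ₜ[k] r) = algebraMap k B (ε (g r)) := by
    intro r
    rw [hKx, hg r, hπB, Algebra.algebraMap_eq_smul_one]
  have claim2 : ∀ x : A ⊗[k] R, K ((πA x) ⊗ₜ[k] (1:R)) = K x := by
    intro x
    induction x using TensorProduct.induction_on with
    | zero => rw [map_zero, TensorProduct.zero_tmul, map_zero]
    | tmul a r =>
      rw [hπA]
      have hsplit : a ⊗ₜ[k] r = (a ⊗ₜ[k] (1:R)) * ((1:A) ⊗ₜ[k] r) := by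
        rw [Algebra.TensorProduct.tmul_mul_tmul, mul_one, one_mul]
      rw [← TensorProduct.smul_tmul', map_smul, hsplit, map_mul, hK1r,
        Algebra.smul_def, mul_comm]
    | add u v hu hv => rw [map_add, TensorProduct.add_tmul, map_add, hu, hv, map_add]
  have hFG : ∀ b : B, F (G b) = b := by
    intro b
    have h1 : F (G b) = K ((πA (e.symm (b ⊗ₜ[k] (1:R)))) ⊗ₜ[k] (1:R)) := rfl
    rw [h1, claim2, hKx, e.apply_symm_apply, hπB, hε1, one_smul]
  refine ⟨AlgEquiv.ofAlgHom F G (AlgHom.ext hFG) (AlgHom.ext hGF), ?_⟩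
  intro a a'
  show F (P.bracket a a') = Q.bracket (F a) (F a')
  have h1 : (P.bracket a a') ⊗ₜ[k] (1:R) = PT.bracket (a ⊗ₜ[k] (1:R)) (a' ⊗ₜ[k] (1:R)) := by
    rw [hPT, mul_one]
  rw [hFa, h1, he, hπBP, ← hFa, ← hFa]
end

section
/- Let A and B be Poisson algebras such that A[t₁,...,tₙ] ≅ B[s₁,...,sₙ] as Poisson algebras for some n ≥ 1 (with all tᵢ, sⱼ Poisson central). Then A has trivial Poisson bracket if and only if B has trivial Poisson bracket. -/
/-- The canonical Poisson bracket on a polynomial extension in which the variables are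
Poisson central: `{∑ aₘ tᵐ, ∑ bₘ' tᵐ'} = ∑ {aₘ,bₘ'} t^(m+m')`. -/
noncomputable def mvBracketFun {σ A : Type*} [CommRing A] (br : A → A → A)
    (p q : MvPolynomial σ A) : MvPolynomial σ A :=
  ∑ m ∈ p.support, ∑ m' ∈ q.support,
    MvPolynomial.monomial (m + m') (br (MvPolynomial.coeff m p) (MvPolynomial.coeff m' q))

lemma PoissonStructure.zero_left {k A : Type*} [CommRing k] [CommRing A] [Algebra k A]
    (P : PoissonStructure k A) (b : A) : P.bracket 0 b = 0 := by
  have h : P.bracket 0 b = P.bracket 0 b + P.bracket 0 b := by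
    simpa using P.add_left 0 0 b
  exact (left_eq_add.mp h)

lemma PoissonStructure.zero_right {k A : Type*} [CommRing k] [CommRing A] [Algebra k A]
    (P : PoissonStructure k A) (b : A) : P.bracket b 0 = 0 := by
  rw [P.antisymm, P.zero_left, neg_zero]

/-- If the base bracket is trivial, the polynomial bracket is trivial. -/
lemma mv_triv {k A : Type*} [CommRing k] [CommRing A] [Algebra k A] {n : ℕ}
    (P : PoissonStructure k A) (PP : PoissonStructure k (MvPolynomial (Fin n) A))
    (hPP : ∀ p q, PP.bracket p q = mvBracketFun P.bracket p q)
    (h : ∀ a b : A, P.bracket a b = 0) :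
    ∀ p q, PP.bracket p q = 0 := by
  intro p q
  rw [hPP]
  unfold mvBracketFun
  simp [h]

/-- If the polynomial bracket is trivial, the base bracket is trivial. -/
lemma triv_of_mv {k A : Type*} [CommRing k] [CommRing A] [Algebra k A] {n : ℕ}
    (P : PoissonStructure k A) (PP : PoissonStructure k (MvPolynomial (Fin n) A))
    (hPP : ∀ p q, PP.bracket p q = mvBracketFun P.bracket p q)
    (h : ∀ p q, PP.bracket p q = 0) :
    ∀ a b : A, P.bracket a b = 0 := by
  intro a b
  rcases eq_or_ne a 0 with rfl | ha
  · exact P.zero_left b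
  rcases eq_or_ne b 0 with rfl | hb
  · exact P.zero_right a
  have h0 := h (MvPolynomial.C a) (MvPolynomial.C b)
  rw [hPP] at h0
  unfold mvBracketFun at h0
  classical
  rw [MvPolynomial.C_apply, MvPolynomial.C_apply, MvPolynomial.support_monomial,
    MvPolynomial.support_monomial, if_neg ha, if_neg hb] at h0
  simp only [Finset.sum_singleton, add_zero, MvPolynomial.coeff_monomial,
    MvPolynomial.monomial_eq_zero] at h0
  exact h0

/-- If `A[t₁,...,tₙ] ≅ B[s₁,...,sₙ]` as Poisson algebras, then `A` has trivial Poisson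
bracket iff `B` does. -/
theorem trivialBracket_iff_of_polyExtension_equiv {k A B : Type*} [CommRing k]
    [CommRing A] [Algebra k A] [CommRing B] [Algebra k B]
    (P : PoissonStructure k A) (Q : PoissonStructure k B)
    (n : ℕ) (hn : 1 ≤ n)
    (PP : PoissonStructure k (MvPolynomial (Fin n) A))
    (QQ : PoissonStructure k (MvPolynomial (Fin n) B))
    (hPP : ∀ p q, PP.bracket p q = mvBracketFun P.bracket p q)
    (hQQ : ∀ p q, QQ.bracket p q = mvBracketFun Q.bracket p q)
    (e : MvPolynomial (Fin n) A ≃ₐ[k] MvPolynomial (Fin n) B)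
    (he : ∀ p q, e (PP.bracket p q) = QQ.bracket (e p) (e q)) :
    (∀ a b : A, P.bracket a b = 0) ↔ (∀ a b : B, Q.bracket a b = 0) := by
  constructor
  · intro hA
    refine triv_of_mv Q QQ hQQ ?_
    intro p q
    have h1 := he (e.symm p) (e.symm q)
    rw [mv_triv P PP hPP hA (e.symm p) (e.symm q)] at h1
    simpa using h1.symm
  · intro hB
    refine triv_of_mv P PP hPP ?_
    intro p q
    have h1 := he p q
    rw [mv_triv Q QQ hQQ hB (e p) (e q)] at h1
    have := congrArg e.symm h1
    simpa using this
end

section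
/- Let Y = ⊕_{i≥0} Yᵢ be an ℕ-graded affine commutative domain over a field k, and let Z be an affine subalgebra of Y containing Y₀ such that the Krull dimension of Z equals the Krull dimension of Y₀, which is finite. Then Z = Y₀. -/
open Order in
lemma aux_ringKrullDim_add_one_le {R : Type*} [CommRing R] [IsDomain R]
    (P : Ideal R) [P.IsPrime] (hP : P ≠ ⊥) :
    ringKrullDim (R ⧸ P) + 1 ≤ ringKrullDim R := by
  have h1 : Nonempty (PrimeSpectrum (R ⧸ P)) := inferInstance
  have h2 : Nonempty (PrimeSpectrum R) := inferInstance
  rw [ringKrullDim, ringKrullDim, krullDim_eq_iSup_length, krullDim_eq_iSup_length]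
  rw [show ((1 : WithBot ℕ∞)) = ((1 : ℕ∞) : WithBot ℕ∞) from rfl, ← WithBot.coe_add,
    WithBot.coe_le_coe, ENat.iSup_add]
  apply iSup_le
  intro p
  -- build the longer chain in Spec R
  have hf : StrictMono (fun q : PrimeSpectrum (R ⧸ P) =>
      (⟨q.asIdeal.comap (Ideal.Quotient.mk P), inferInstance⟩ : PrimeSpectrum R)) := by
    apply Monotone.strictMono_of_injective
    · intro a b hab
      exact Ideal.comap_mono hab
    · intro a b h
      exact PrimeSpectrum.ext_iff.mpr <|
        Ideal.comap_injective_of_surjective _ Ideal.Quotient.mk_surjective <| by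
          simpa using h
  set q := p.map _ hf with hq
  have hlt : (⟨⊥, Ideal.bot_prime⟩ : PrimeSpectrum R) < q.head := by
    show (⊥ : Ideal R) < (q.head).asIdeal
    refine lt_of_lt_of_le hP.bot_lt ?_
    have : q.head = ⟨(p.head).asIdeal.comap (Ideal.Quotient.mk P), inferInstance⟩ := by
      simp [hq, RelSeries.head]
      rfl
    rw [this]
    intro x hx
    simp only [Ideal.mem_comap]
    rw [show (Ideal.Quotient.mk P x) = 0 from Ideal.Quotient.eq_zero_iff_mem.mpr hx]
    exact (p.head).asIdeal.zero_mem
  refine le_trans (le_of_eq ?_)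
    (le_iSup (fun r : LTSeries (PrimeSpectrum R) => (r.length : ℕ∞)) (q.cons _ hlt))
  simp [hq]

/-- If `Y` is an ℕ-graded affine commutative domain and `Z` an affine subalgebra
containing `Y₀` with `Kdim Z = Kdim Y₀ < ∞`, then `Z = Y₀`. -/
theorem graded_subalgebra_eq_degreeZero {k Y : Type*} [Field k]
    [CommRing Y] [IsDomain Y] [Algebra k Y] [Algebra.FiniteType k Y]
    (𝒜 : ℕ → Submodule k Y) [GradedAlgebra 𝒜]
    (Y0 : Subalgebra k Y) (hY0 : Subalgebra.toSubmodule Y0 = 𝒜 0)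
    (Z : Subalgebra k Y) (hZfg : Z.FG) (hle : Y0 ≤ Z)
    (hdim : ringKrullDim Z = ringKrullDim Y0)
    (hfin : ringKrullDim Y0 ≠ ⊤) :
    Z = Y0 := by
  classical
  have hmem : ∀ x : Y, GradedRing.projZeroRingHom 𝒜 x ∈ Y0 := by
    intro x
    have h : GradedRing.projZeroRingHom 𝒜 x ∈ 𝒜 0 := by
      rw [GradedRing.projZeroRingHom_apply]
      exact SetLike.coe_mem _
    rw [← hY0] at h
    exact h
  have hproj : ∀ y : Y, y ∈ 𝒜 0 → GradedRing.projZeroRingHom 𝒜 y = y := by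
    intro y hy
    rw [GradedRing.projZeroRingHom_apply, DirectSum.decompose_of_mem_same 𝒜 hy]
  have hmem0 : ∀ y : Y, y ∈ Y0 → y ∈ 𝒜 0 := by
    intro y hy; rw [← hY0]; exact hy
  let φ : Z →+* Y0 :=
    ((GradedRing.projZeroRingHom 𝒜).comp (Subalgebra.val Z).toRingHom).codRestrict Y0
      (fun z => hmem z)
  have hφ : ∀ z : Z, (φ z : Y) = GradedRing.projZeroRingHom 𝒜 (z : Y) := fun z => rfl
  have hsurj : Function.Surjective φ := by
    intro y
    refine ⟨⟨(y : Y), hle y.2⟩, Subtype.ext ?_⟩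
    rw [hφ]
    exact hproj _ (hmem0 _ y.2)
  have hker : RingHom.ker φ = ⊥ := by
    by_contra hne
    haveI : (RingHom.ker φ).IsPrime := RingHom.ker_isPrime φ
    have h1 := aux_ringKrullDim_add_one_le (RingHom.ker φ) hne
    have h2 : ringKrullDim (Z ⧸ RingHom.ker φ) = ringKrullDim Y0 :=
      ringKrullDim_eq_of_ringEquiv (RingHom.quotientKerEquivOfSurjective hsurj)
    rw [h2, ← hdim] at h1
    have ha : ringKrullDim Z ≠ ⊤ := by rw [hdim]; exact hfin
    rcases hc : ringKrullDim Z with _ | m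
    · have h0 := ringKrullDim_nonneg_of_nontrivial (R := Z)
      rw [hc] at h0
      have hb : (⊥ : WithBot ℕ∞) < 0 := WithBot.bot_lt_coe _
      exact hb.not_ge h0
    · rcases m with _ | n
      · exact ha (by rw [hc]; rfl)
      · rw [hc] at h1
        have h1' : ((n : ℕ∞) : WithBot ℕ∞) + 1 ≤ ((n : ℕ∞) : WithBot ℕ∞) := h1
        have : (n : ℕ) + 1 ≤ n := by exact_mod_cast h1'
        omega
  have hinj : Function.Injective φ := by
    rwa [RingHom.injective_iff_ker_eq_bot]
  refine le_antisymm ?_ hle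
  intro z hz
  have h1 : GradedRing.projZeroRingHom 𝒜 z ∈ Y0 := hmem z
  have h2 : φ ⟨z, hz⟩ = φ ⟨GradedRing.projZeroRingHom 𝒜 z, hle h1⟩ := by
    apply Subtype.ext
    rw [hφ, hφ]
    exact (hproj _ (hmem0 _ h1)).symm
  have h3 := hinj h2
  have h4 : z = GradedRing.projZeroRingHom 𝒜 z := congrArg Subtype.val h3
  rw [h4]
  exact h1
end

section
/- Let A and B be connected graded algebras over a field k, each generated in degree one, with dim_k A₁ < ∞. If A ≅ B as ungraded k-algebras, then dim_k B₁ = dim_k A₁. -/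
universe u

open DirectSum

/-- Auxiliary lemma: if `B` is a connected graded algebra and `V` is a subspace
generating `B` as an algebra, then the degree-one part of `B` has rank at most
that of `V`. -/
theorem aux_degreeOne_rank_le {k : Type*} {B : Type u} [Field k]
    [Ring B] [Algebra k B]
    (ℬ : ℕ → Submodule k B) [GradedAlgebra ℬ]
    (hB0 : ℬ 0 = Submodule.span k {1})
    (V : Submodule k B) (hV : Algebra.adjoin k (V : Set B) = ⊤) :
    Module.rank k (ℬ 1) ≤ Module.rank k V := by
  classical
  set π : B →ₗ[k] B := GradedAlgebra.proj ℬ 1 with hπ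
  set W : Submodule k B := V.map π with hW
  -- every element of `B` has degree-one projection in `W`
  have key : ∀ x : B, π x ∈ W := by
    intro x
    have hx : x ∈ Algebra.adjoin k (V : Set B) := hV ▸ Algebra.mem_top
    induction hx using Algebra.adjoin_induction with
    | mem v hv => exact ⟨v, hv, rfl⟩
    | algebraMap r =>
      have h1 : π ((1 : B)) = 0 := by
        have : ((decompose ℬ (1 : B)) 1 : B) = 0 :=
          decompose_of_mem_ne ℬ (hB0 ▸ Submodule.mem_span_singleton_self 1)
            (by norm_num)
        simpa [hπ, GradedAlgebra.proj_apply] using this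
      have : algebraMap k B r = r • (1 : B) := by
        rw [Algebra.smul_def, mul_one]
      rw [this, map_smul, h1, smul_zero]
      exact W.zero_mem
    | add x y _ _ hx hy => rw [map_add]; exact W.add_mem hx hy
    | mul x y _ _ hx hy =>
      -- compute the degree-one component of a product
      have hmul : π (x * y) =
          ∑ ij ∈ (((decompose ℬ x).support ×ˢ (decompose ℬ y).support).filter
            (fun ij : ℕ × ℕ => ij.1 + ij.2 = 1)),
            ((decompose ℬ x) ij.1 : B) * ((decompose ℬ y) ij.2 : B) := by
        rw [hπ, GradedAlgebra.proj_apply, DirectSum.decompose_mul,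
          DirectSum.coe_mul_apply ℬ]
      rw [hmul]
      refine W.sum_mem fun ij hij => ?_
      have hsum : ij.1 + ij.2 = 1 := (Finset.mem_filter.mp hij).2
      -- scalar description of degree-zero components
      have hzero' : ∀ b : B, b ∈ ℬ 0 → ∃ c : k, b = c • (1 : B) := by
        intro b hb
        rw [hB0, Submodule.mem_span_singleton] at hb
        obtain ⟨c, hc⟩ := hb
        exact ⟨c, hc.symm⟩
      have hzero : ∀ z : B, ∃ c : k, ((decompose ℬ z) 0 : B) = c • (1 : B) :=
        fun z => hzero' _ ((decompose ℬ z) 0).2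
      rcases Nat.eq_zero_or_pos ij.1 with h1 | h1
      · -- ij = (0, 1)
        have h2 : ij.2 = 1 := by omega
        obtain ⟨c, hc⟩ := hzero x
        rw [h1, h2, hc, smul_mul_assoc, one_mul]
        have : ((decompose ℬ y) 1 : B) = π y := by
          rw [hπ, GradedAlgebra.proj_apply]
        rw [this]
        exact W.smul_mem c hy
      · -- ij = (1, 0)
        have h1' : ij.1 = 1 := by omega
        have h2 : ij.2 = 0 := by omega
        obtain ⟨c, hc⟩ := hzero y
        rw [h1', h2, hc, mul_smul_comm, mul_one]
        have : ((decompose ℬ x) 1 : B) = π x := by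
          rw [hπ, GradedAlgebra.proj_apply]
        rw [this]
        exact W.smul_mem c hx
  -- hence `ℬ 1 ≤ W`
  have hle : ℬ 1 ≤ W := by
    intro x hx
    have : π x = x := by
      rw [hπ, GradedAlgebra.proj_apply, decompose_of_mem_same ℬ hx]
    rw [← this]
    exact key x
  calc Module.rank k (ℬ 1) ≤ Module.rank k W := Submodule.rank_mono hle
    _ ≤ Module.rank k V := rank_map_le π V

/-- If two connected graded algebras generated in degree one are isomorphic as ungraded
algebras, then their degree-one pieces have equal dimension. -/
theorem degreeOne_dim_eq_of_algEquiv {k : Type*} {A B : Type u} [Field k]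
    [Ring A] [Algebra k A] [Ring B] [Algebra k B]
    (𝒜 : ℕ → Submodule k A) [GradedAlgebra 𝒜]
    (ℬ : ℕ → Submodule k B) [GradedAlgebra ℬ]
    (hA0 : 𝒜 0 = Submodule.span k {1}) (hB0 : ℬ 0 = Submodule.span k {1})
    (hAgen : Algebra.adjoin k (𝒜 1 : Set A) = ⊤)
    (hBgen : Algebra.adjoin k (ℬ 1 : Set B) = ⊤)
    [Module.Finite k (𝒜 1)]
    (e : A ≃ₐ[k] B) :
    Module.rank k (ℬ 1) = Module.rank k (𝒜 1) := by
  classical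
  -- transport a generating subspace along an algebra equivalence
  have transport : ∀ {X Y : Type u} [Ring X] [Algebra k X] [Ring Y] [Algebra k Y]
      (f : X ≃ₐ[k] Y) (p : Submodule k X), Algebra.adjoin k (p : Set X) = ⊤ →
      Algebra.adjoin k (((p.map f.toLinearMap) : Submodule k Y) : Set Y) = ⊤ ∧
      Module.rank k (p.map f.toLinearMap) = Module.rank k p := by
    intro X Y _ _ _ _ f p hp
    constructor
    · have himg : ((p.map f.toLinearMap : Submodule k Y) : Set Y) = f '' (p : Set X) := by
        ext y; simp [Submodule.mem_map]
      have htop : Algebra.adjoin k (⇑f.toAlgHom '' (p : Set X)) = ⊤ := by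
        rw [← AlgHom.map_adjoin, hp, Algebra.map_top]
        exact (AlgHom.range_eq_top _).mpr f.surjective
      rw [himg]
      exact htop
    · exact ((p.equivMapOfInjective f.toLinearMap f.injective).symm.rank_eq)
  -- forward inequality: rank (ℬ 1) ≤ rank (𝒜 1)
  obtain ⟨hgenB, hrkB⟩ := transport e (𝒜 1) hAgen
  have h1 : Module.rank k (ℬ 1) ≤ Module.rank k (𝒜 1) := by
    calc Module.rank k (ℬ 1) ≤ Module.rank k ((𝒜 1).map e.toLinearMap) :=
          aux_degreeOne_rank_le ℬ hB0 _ hgenB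
      _ = Module.rank k (𝒜 1) := hrkB
  -- the degree-one part of `B` is finite dimensional
  have hfin : Module.Finite k (ℬ 1) := by
    rw [← Module.rank_lt_aleph0_iff]
    exact lt_of_le_of_lt h1 (Module.rank_lt_aleph0 k (𝒜 1))
  -- backward inequality
  obtain ⟨hgenA, hrkA⟩ := transport e.symm (ℬ 1) hBgen
  have h2 : Module.rank k (𝒜 1) ≤ Module.rank k (ℬ 1) := by
    calc Module.rank k (𝒜 1) ≤ Module.rank k ((ℬ 1).map e.symm.toLinearMap) :=
          aux_degreeOne_rank_le 𝒜 hA0 _ hgenA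
      _ = Module.rank k (ℬ 1) := hrkA
  exact le_antisymm h1 h2
end

section
/- Let A be a Poisson algebra over a field k and let ∂ = (∂ᵢ)_{i=0}^∞ be an iterative higher Poisson derivation of A such that for every a ∈ A there exists n with ∂ᵢ(a) = 0 for all i ≥ n. Then the map G : A[t] → A[t] defined by a ↦ ∑_{i≥0} ∂ᵢ(a) tⁱ and t ↦ t is a Poisson algebra automorphism of A[t] (where t is Poisson central), with inverse a ↦ ∑_{i≥0} ∂ᵢ(a)(−t)ⁱ. -/
noncomputable def polyBracketFun {A : Type*} [CommRing A] (br : A → A → A)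
    (p q : Polynomial A) : Polynomial A :=
  ∑ i ∈ p.support, ∑ j ∈ q.support,
    Polynomial.C (br (p.coeff i) (q.coeff j)) * Polynomial.X ^ (i + j)


open Polynomial Finset


section HPDAux

variable {k A : Type*} [Field k] [CommRing A] [Algebra k A]

/-- The polynomial `∑ D i a • X^i`. -/
noncomputable def hpdPhi (D : ℕ → A →ₗ[k] A)
    (hfin : ∀ a : A, ∃ n : ℕ, ∀ i ≥ n, D i a = 0) (a : A) : Polynomial A :=
  ⟨AddMonoidAlgebra.ofCoeff (Finsupp.ofSupportFinite (fun n => D n a) (by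
    obtain ⟨n, hn⟩ := hfin a
    refine Set.Finite.subset (Finset.range n).finite_toSet (fun i hi => ?_)
    simp only [Function.mem_support] at hi
    simp only [Finset.coe_range, Set.mem_Iio]
    by_contra h
    exact hi (hn i (le_of_not_gt h))))⟩

lemma hpdPhi_coeff (D : ℕ → A →ₗ[k] A)
    (hfin : ∀ a : A, ∃ n : ℕ, ∀ i ≥ n, D i a = 0) (a : A) (n : ℕ) :
    (hpdPhi D hfin a).coeff n = D n a := rfl

lemma hpd_one (D : ℕ → A →ₗ[k] A) (h0 : D 0 = LinearMap.id)
    (hmul : ∀ (n : ℕ) (a b : A),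
      D n (a * b) = ∑ i ∈ Finset.range (n + 1), D i a * D (n - i) b)
    (n : ℕ) (hn : n ≠ 0) : D n 1 = (0 : A) := by
  induction n using Nat.strong_induction_on with
  | _ n ih =>
    have h := hmul n 1 1
    rw [mul_one, Finset.sum_range_succ] at h
    have hfirst : ∑ i ∈ range n, D i 1 * D (n - i) 1 = D 0 1 * D (n - 0) 1 := by
      refine Finset.sum_eq_single_of_mem 0 (Finset.mem_range.mpr (Nat.pos_of_ne_zero hn)) ?_
      intro i hi hi0
      rw [ih i (Finset.mem_range.mp hi) hi0, zero_mul]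
    rw [hfirst] at h
    simp only [h0, LinearMap.id_coe, id_eq, Nat.sub_zero, Nat.sub_self, one_mul, mul_one] at h
    linear_combination -h

noncomputable def hpdPhiRingHom (D : ℕ → A →ₗ[k] A) (h0 : D 0 = LinearMap.id)
    (hmul : ∀ (n : ℕ) (a b : A),
      D n (a * b) = ∑ i ∈ Finset.range (n + 1), D i a * D (n - i) b)
    (hfin : ∀ a : A, ∃ n : ℕ, ∀ i ≥ n, D i a = 0) : A →+* Polynomial A where
  toFun := hpdPhi D hfin
  map_one' := by
    ext n
    rw [hpdPhi_coeff, Polynomial.coeff_one]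
    rcases eq_or_ne n 0 with h | h
    · simp [h, h0]
    · simp [h, hpd_one D h0 hmul n h]
  map_mul' a b := by
    ext n
    rw [hpdPhi_coeff, hmul, Polynomial.coeff_mul,
      Finset.Nat.sum_antidiagonal_eq_sum_range_succ_mk]
    exact Finset.sum_congr rfl fun i _ => by rw [hpdPhi_coeff, hpdPhi_coeff]
  map_zero' := by ext n; simp [hpdPhi_coeff]
  map_add' a b := by ext n; simp [hpdPhi_coeff]

noncomputable def hpdG (D : ℕ → A →ₗ[k] A) (h0 : D 0 = LinearMap.id)
    (hmul : ∀ (n : ℕ) (a b : A),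
      D n (a * b) = ∑ i ∈ Finset.range (n + 1), D i a * D (n - i) b)
    (hfin : ∀ a : A, ∃ n : ℕ, ∀ i ≥ n, D i a = 0) :
    Polynomial A →ₐ[k] Polynomial A :=
  { Polynomial.eval₂RingHom (hpdPhiRingHom D h0 hmul hfin) Polynomial.X with
    commutes' := fun r => by
      simp only [Polynomial.algebraMap_apply, RingHom.toMonoidHom_eq_coe,
        OneHom.toFun_eq_coe, MonoidHom.toOneHom_coe, MonoidHom.coe_coe,
        coe_eval₂RingHom, Polynomial.eval₂_C]
      show hpdPhi D hfin (algebraMap k A r) = Polynomial.C (algebraMap k A r)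
      ext n
      rw [hpdPhi_coeff, Polynomial.coeff_C]
      rcases eq_or_ne n 0 with h | h
      · simp [h, h0]
      · rw [if_neg h, Algebra.algebraMap_eq_smul_one, map_smul,
          hpd_one D h0 hmul n h, smul_zero] }

lemma hpdG_C (D : ℕ → A →ₗ[k] A) (h0) (hmul) (hfin) (a : A) :
    hpdG D h0 hmul hfin (Polynomial.C a) = hpdPhi D hfin a :=
  Polynomial.eval₂_C _ _

lemma hpdG_X (D : ℕ → A →ₗ[k] A) (h0) (hmul) (hfin) :
    hpdG D h0 hmul hfin Polynomial.X = Polynomial.X :=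
  Polynomial.eval₂_X _ _

lemma hpdG_coeff (D : ℕ → A →ₗ[k] A) (h0) (hmul) (hfin) (p : Polynomial A) (m : ℕ) :
    (hpdG D h0 hmul hfin p).coeff m
      = ∑ e ∈ range (m + 1), D (m - e) (p.coeff e) := by
  show (Polynomial.eval₂ (hpdPhiRingHom D h0 hmul hfin) Polynomial.X p).coeff m = _
  rw [Polynomial.eval₂_eq_sum, Polynomial.sum_def, Polynomial.finset_sum_coeff]
  have step : ∀ e ∈ p.support,
      ((hpdPhiRingHom D h0 hmul hfin) (p.coeff e) * Polynomial.X ^ e).coeff m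
        = if e ∈ range (m + 1) then D (m - e) (p.coeff e) else 0 := by
    intro e _
    rw [Polynomial.coeff_mul_X_pow']
    simp only [Finset.mem_range, Nat.lt_succ_iff]
    congr 1
  rw [Finset.sum_congr rfl step, Finset.sum_ite_mem]
  refine Finset.sum_subset (Finset.inter_subset_right) ?_
  intro e he hne
  have hz : p.coeff e = 0 := by
    by_contra hne'
    exact hne (Finset.mem_inter.mpr ⟨Polynomial.mem_support_iff.mpr hne', he⟩)
  rw [hz, map_zero]

lemma hpdG_comp_C (D E : ℕ → A →ₗ[k] A) (h0) (hmul) (hfin)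
    (hEfin : ∀ a : A, ∃ n : ℕ, ∀ i ≥ n, E i a = 0)
    (hconv : ∀ (m : ℕ) (a : A),
      ∑ e ∈ range (m + 1), D (m - e) (E e a) = if m = 0 then a else 0)
    (a : A) :
    hpdG D h0 hmul hfin (hpdPhi E hEfin a) = Polynomial.C a := by
  ext m
  rw [hpdG_coeff, Polynomial.coeff_C, ← hconv m a]
  exact Finset.sum_congr rfl fun e _ => by rw [hpdPhi_coeff]

lemma hpdPhi_eq_finsum (D : ℕ → A →ₗ[k] A)
    (hfin : ∀ a : A, ∃ n : ℕ, ∀ i ≥ n, D i a = 0) (a : A) :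
    hpdPhi D hfin a = ∑ᶠ i : ℕ, Polynomial.C (D i a) * Polynomial.X ^ i := by
  obtain ⟨n, hn⟩ := hfin a
  rw [finsum_eq_finset_sum_of_support_subset _ (s := Finset.range n) ?_]
  · ext m
    rw [hpdPhi_coeff, Polynomial.finset_sum_coeff]
    simp only [Polynomial.coeff_C_mul, Polynomial.coeff_X_pow, mul_ite, mul_one, mul_zero]
    rw [Finset.sum_ite_eq (Finset.range n) m (fun i => D i a)]
    by_cases hm : m < n
    · rw [if_pos (Finset.mem_range.mpr hm)]
    · rw [if_neg (fun h => hm (Finset.mem_range.mp h)), hn m (le_of_not_gt hm)]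
  · intro i hi
    rw [Function.mem_support] at hi
    rw [Finset.coe_range, Set.mem_Iio]
    by_contra h
    exact hi (by rw [hn i (le_of_not_gt h), map_zero, zero_mul])

end HPDAux


section PBAux

variable {A : Type*} [CommRing A]

lemma polyBracketFun_coeff (br : A → A → A)
    (br0l : ∀ b, br 0 b = 0) (br0r : ∀ a, br a 0 = 0)
    (p q : Polynomial A) (n : ℕ) :
    (polyBracketFun br p q).coeff n
      = ∑ ij ∈ Finset.HasAntidiagonal.antidiagonal n, br (p.coeff ij.1) (q.coeff ij.2) := by
  unfold polyBracketFun
  rw [Polynomial.finset_sum_coeff]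
  simp only [Polynomial.finset_sum_coeff, Polynomial.coeff_C_mul,
    Polynomial.coeff_X_pow, mul_ite, mul_one, mul_zero]
  rw [← Finset.sum_product']
  have key : ∀ x : ℕ × ℕ,
      (if n = x.1 + x.2 then br (p.coeff x.1) (q.coeff x.2) else 0)
        = (if x ∈ p.support ×ˢ q.support then
            (if n = x.1 + x.2 then br (p.coeff x.1) (q.coeff x.2) else 0) else 0) := by
    intro x
    by_cases hx : x ∈ p.support ×ˢ q.support
    · rw [if_pos hx]
    · rw [if_neg hx]
      rw [Finset.mem_product, not_and_or] at hx
      rcases hx with hx | hx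
      · rw [Polynomial.notMem_support_iff.mp hx, br0l]; exact ite_self 0
      · rw [Polynomial.notMem_support_iff.mp hx, br0r]; exact ite_self 0
  calc ∑ x ∈ p.support ×ˢ q.support,
        (if n = x.1 + x.2 then br (p.coeff x.1) (q.coeff x.2) else 0)
      = ∑ x ∈ p.support ×ˢ q.support ∪ Finset.HasAntidiagonal.antidiagonal n,
        (if n = x.1 + x.2 then br (p.coeff x.1) (q.coeff x.2) else 0) := by
        refine Finset.sum_subset Finset.subset_union_left ?_
        intro x _ hx
        rw [key x, if_neg hx]
    _ = ∑ ij ∈ Finset.HasAntidiagonal.antidiagonal n, br (p.coeff ij.1) (q.coeff ij.2) := by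
        refine (Finset.sum_subset Finset.subset_union_right ?_).symm.trans ?_
        · intro x _ hx
          rw [Finset.HasAntidiagonal.mem_antidiagonal] at hx
          rw [if_neg (fun h => hx h.symm)]
        · refine Finset.sum_congr rfl fun ij hij => ?_
          rw [Finset.HasAntidiagonal.mem_antidiagonal] at hij
          rw [if_pos hij.symm]

lemma polyBracketFun_add_left (br : A → A → A)
    (br0l : ∀ b, br 0 b = 0) (br0r : ∀ a, br a 0 = 0)
    (braddl : ∀ a b c, br (a + b) c = br a c + br b c)
    (p p' q : Polynomial A) :
    polyBracketFun br (p + p') q = polyBracketFun br p q + polyBracketFun br p' q := by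
  ext n
  simp [polyBracketFun_coeff br br0l br0r, Polynomial.coeff_add, braddl,
    Finset.sum_add_distrib]

lemma polyBracketFun_add_right (br : A → A → A)
    (br0l : ∀ b, br 0 b = 0) (br0r : ∀ a, br a 0 = 0)
    (braddr : ∀ a b c, br a (b + c) = br a b + br a c)
    (p q q' : Polynomial A) :
    polyBracketFun br p (q + q') = polyBracketFun br p q + polyBracketFun br p q' := by
  ext n
  simp [polyBracketFun_coeff br br0l br0r, Polynomial.coeff_add, braddr,
    Finset.sum_add_distrib]

lemma polyBracketFun_monomial (br : A → A → A)
    (br0l : ∀ b, br 0 b = 0) (br0r : ∀ a, br a 0 = 0)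
    (i j : ℕ) (a b : A) :
    polyBracketFun br (Polynomial.monomial i a) (Polynomial.monomial j b)
      = Polynomial.monomial (i + j) (br a b) := by
  ext n
  rw [polyBracketFun_coeff br br0l br0r, Polynomial.coeff_monomial]
  simp only [Polynomial.coeff_monomial]
  have key : ∀ ij : ℕ × ℕ,
      br (if i = ij.1 then a else 0) (if j = ij.2 then b else 0)
        = if (i, j) = ij then br a b else 0 := by
    intro ij
    by_cases h1 : i = ij.1 <;> by_cases h2 : j = ij.2 <;>
      simp [h1, h2, br0l, br0r, Prod.ext_iff]
  rw [Finset.sum_congr rfl fun ij _ => key ij,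
    Finset.sum_ite_eq (Finset.HasAntidiagonal.antidiagonal n) (i, j) (fun _ => br a b)]
  simp [Finset.mem_antidiagonal]

lemma polyBracketFun_flip (br : A → A → A) (br0l : ∀ b, br 0 b = 0)
    (br0r : ∀ a, br a 0 = 0) (p q : Polynomial A) :
    polyBracketFun br p q = polyBracketFun (fun a b => br b a) q p := by
  ext n
  rw [polyBracketFun_coeff br br0l br0r,
    polyBracketFun_coeff (fun a b => br b a) (fun b => br0r b) (fun a => br0l a)]
  simpa using (Finset.Nat.sum_antidiagonal_swap
    (f := fun ij => br (p.coeff ij.2) (q.coeff ij.1)))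

lemma polyBracketFun_mul_X_pow_left (br : A → A → A)
    (br0l : ∀ b, br 0 b = 0) (br0r : ∀ a, br a 0 = 0)
    (p q : Polynomial A) (i : ℕ) :
    polyBracketFun br (p * Polynomial.X ^ i) q
      = polyBracketFun br p q * Polynomial.X ^ i := by
  ext m
  rw [polyBracketFun_coeff br br0l br0r, Polynomial.coeff_mul_X_pow',
    Finset.Nat.sum_antidiagonal_eq_sum_range_succ_mk]
  simp only [Polynomial.coeff_mul_X_pow']
  by_cases him : i ≤ m
  · rw [if_pos him, polyBracketFun_coeff br br0l br0r,
      Finset.Nat.sum_antidiagonal_eq_sum_range_succ_mk]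
    have split : ∑ u ∈ range (m + 1),
        br (if i ≤ u then p.coeff (u - i) else 0) (q.coeff (m - u))
          = ∑ u ∈ Finset.Ico i (m + 1), br (p.coeff (u - i)) (q.coeff (m - u)) := by
      rw [Finset.range_eq_Ico,
        ← Finset.sum_Ico_consecutive _ (Nat.zero_le i) (by omega : i ≤ m + 1)]
      have hz : ∑ u ∈ Finset.Ico 0 i,
          br (if i ≤ u then p.coeff (u - i) else 0) (q.coeff (m - u)) = 0 := by
        refine Finset.sum_eq_zero fun u hu => ?_
        rw [Finset.mem_Ico] at hu
        rw [if_neg (by omega), br0l]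
      rw [hz, zero_add]
      refine Finset.sum_congr rfl fun u hu => ?_
      rw [Finset.mem_Ico] at hu
      rw [if_pos hu.1]
    rw [split, Finset.sum_Ico_eq_sum_range]
    have hrange : m + 1 - i = (m - i) + 1 := by omega
    rw [hrange]
    refine Finset.sum_congr rfl fun s hs => ?_
    congr 1
    · congr 1; omega
    · congr 1; omega
  · rw [if_neg him]
    refine Finset.sum_eq_zero fun u hu => ?_
    rw [Finset.mem_range, Nat.lt_succ_iff] at hu
    rw [if_neg (by omega), br0l]

lemma polyBracketFun_mul_X_pow_right (br : A → A → A)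
    (br0l : ∀ b, br 0 b = 0) (br0r : ∀ a, br a 0 = 0)
    (p q : Polynomial A) (j : ℕ) :
    polyBracketFun br p (q * Polynomial.X ^ j)
      = polyBracketFun br p q * Polynomial.X ^ j := by
  rw [polyBracketFun_flip br br0l br0r,
    polyBracketFun_mul_X_pow_left (fun a b => br b a) (fun b => br0r b) (fun a => br0l a),
    ← polyBracketFun_flip br br0l br0r]

end PBAux

/-- An iterative, locally finite higher Poisson derivation of `A` induces a Poisson
automorphism `G : A[t] → A[t]`, `a ↦ ∑ ∂ᵢ(a) tⁱ`, `t ↦ t`, with inverse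
`a ↦ ∑ ∂ᵢ(a)(−t)ⁱ`. -/
theorem iterative_higherPoissonDerivation_automorphism {k A : Type*} [Field k]
    [CommRing A] [Algebra k A]
    (P : PoissonStructure k A) (PP : PoissonStructure k (Polynomial A))
    (hPP : ∀ p q, PP.bracket p q = polyBracketFun P.bracket p q)
    (D : ℕ → A →ₗ[k] A)
    (h0 : D 0 = LinearMap.id)
    (hmul : ∀ (n : ℕ) (a b : A),
      D n (a * b) = ∑ i ∈ Finset.range (n + 1), D i a * D (n - i) b)
    (hpois : ∀ (n : ℕ) (a b : A),
      D n (P.bracket a b) = ∑ i ∈ Finset.range (n + 1), P.bracket (D i a) (D (n - i) b))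
    (hiter : ∀ (i j : ℕ) (a : A), D i (D j a) = (Nat.choose (i + j) i) • D (i + j) a)
    (hfin : ∀ a : A, ∃ n : ℕ, ∀ i ≥ n, D i a = 0) :
    ∃ G : Polynomial A ≃ₐ[k] Polynomial A,
      (∀ a : A, G (Polynomial.C a) = ∑ᶠ i : ℕ, Polynomial.C (D i a) * Polynomial.X ^ i) ∧
      G Polynomial.X = Polynomial.X ∧
      (∀ p q, G (PP.bracket p q) = PP.bracket (G p) (G q)) ∧
      (∀ a : A, G.symm (Polynomial.C a)
        = ∑ᶠ i : ℕ, Polynomial.C (D i a) * (-Polynomial.X) ^ i) ∧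
      G.symm Polynomial.X = Polynomial.X := by
  classical
  -- basic bracket facts
  have br0l : ∀ b : A, P.bracket 0 b = 0 := fun b => by
    have h := P.smul_left (0 : k) 0 b
    rwa [zero_smul, zero_smul] at h
  have br0r : ∀ a : A, P.bracket a 0 = 0 := fun a => by
    rw [P.antisymm, br0l, neg_zero]
  have braddr : ∀ a b c : A, P.bracket a (b + c) = P.bracket a b + P.bracket a c := by
    intro a b c
    rw [P.antisymm, P.add_left, neg_add, ← P.antisymm, ← P.antisymm]
  -- the sign-twisted family
  set E : ℕ → A →ₗ[k] A := fun i => ((-1 : A) ^ i) • D i with hE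
  have hEapp : ∀ (i : ℕ) (a : A), E i a = (-1 : A) ^ i * D i a := by
    intro i a; rw [hE]; simp [smul_eq_mul]
  have hE0 : E 0 = LinearMap.id := by
    ext a; rw [hEapp]; simp [h0]
  have hEmul : ∀ (n : ℕ) (a b : A),
      E n (a * b) = ∑ i ∈ Finset.range (n + 1), E i a * E (n - i) b := by
    intro n a b
    simp only [hEapp]
    rw [hmul, Finset.mul_sum]
    refine Finset.sum_congr rfl fun i hi => ?_
    rw [Finset.mem_range, Nat.lt_succ_iff] at hi
    have h2 : (-1 : A) ^ n = (-1) ^ i * (-1) ^ (n - i) := by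
      rw [← pow_add]; congr 1; omega
    rw [h2]; ring
  have hEfin : ∀ a : A, ∃ n : ℕ, ∀ i ≥ n, E i a = 0 := by
    intro a; obtain ⟨n, hn⟩ := hfin a
    exact ⟨n, fun i hi => by rw [hEapp, hn i hi, mul_zero]⟩
  have hzs : ∀ (e : ℕ) (x : A), (-1 : A) ^ e * x = ((-1 : ℤ) ^ e) • x := by
    intro e x
    rw [zsmul_eq_mul]; push_cast; ring
  -- the two convolution identities
  have hconvDE : ∀ (m : ℕ) (a : A),
      ∑ e ∈ Finset.range (m + 1), D (m - e) (E e a) = if m = 0 then a else 0 := by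
    intro m a
    have hterm : ∀ e ∈ Finset.range (m + 1),
        D (m - e) (E e a) = ((-1 : ℤ) ^ e * (m.choose e : ℤ)) • D m a := by
      intro e he
      rw [Finset.mem_range, Nat.lt_succ_iff] at he
      rw [hEapp, hzs, map_zsmul, hiter]
      have h1 : m - e + e = m := by omega
      rw [h1, Nat.choose_symm he, ← natCast_zsmul, smul_smul]
    rw [Finset.sum_congr rfl hterm, ← Finset.sum_smul, Int.alternating_sum_range_choose]
    by_cases hm : m = 0
    · subst hm; simp [h0]
    · simp [hm]
  have hconvED : ∀ (m : ℕ) (a : A),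
      ∑ e ∈ Finset.range (m + 1), E (m - e) (D e a) = if m = 0 then a else 0 := by
    intro m a
    have hterm : ∀ e ∈ Finset.range (m + 1),
        E (m - e) (D e a) = ((-1 : ℤ) ^ (m - e) * (m.choose e : ℤ)) • D m a := by
      intro e he
      rw [Finset.mem_range, Nat.lt_succ_iff] at he
      rw [hEapp, hzs, hiter]
      have h1 : m - e + e = m := by omega
      rw [h1, Nat.choose_symm he, ← natCast_zsmul, smul_smul]
    rw [Finset.sum_congr rfl hterm, ← Finset.sum_smul]
    have hsum : ∑ e ∈ Finset.range (m + 1), (-1 : ℤ) ^ (m - e) * (m.choose e : ℤ)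
        = ∑ e ∈ Finset.range (m + 1), (-1 : ℤ) ^ e * (m.choose e : ℤ) := by
      rw [← Finset.sum_range_reflect (fun e => (-1 : ℤ) ^ e * (m.choose e : ℤ)) (m + 1)]
      refine Finset.sum_congr rfl fun e he => ?_
      rw [Finset.mem_range, Nat.lt_succ_iff] at he
      have h1 : m + 1 - 1 - e = m - e := by omega
      rw [h1]
      congr 1
      exact_mod_cast (Nat.choose_symm he).symm
    rw [hsum, Int.alternating_sum_range_choose]
    by_cases hm : m = 0
    · subst hm; simp [h0]
    · simp [hm]
  -- the forward and backward algebra maps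
  have hGHcomp : ∀ x, hpdG D h0 hmul hfin (hpdG E hE0 hEmul hEfin x) = x := by
    have hrh : ((hpdG D h0 hmul hfin).toRingHom).comp
        ((hpdG E hE0 hEmul hEfin).toRingHom) = RingHom.id (Polynomial A) := by
      refine Polynomial.ringHom_ext (fun a => ?_) ?_
      · show hpdG D h0 hmul hfin (hpdG E hE0 hEmul hEfin (Polynomial.C a))
          = Polynomial.C a
        rw [hpdG_C E hE0 hEmul hEfin a]
        exact hpdG_comp_C D E h0 hmul hfin hEfin hconvDE a
      · show hpdG D h0 hmul hfin (hpdG E hE0 hEmul hEfin Polynomial.X) = Polynomial.X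
        rw [hpdG_X E hE0 hEmul hEfin, hpdG_X D h0 hmul hfin]
    exact fun x => RingHom.congr_fun hrh x
  have hHGcomp : ∀ x, hpdG E hE0 hEmul hEfin (hpdG D h0 hmul hfin x) = x := by
    have hrh : ((hpdG E hE0 hEmul hEfin).toRingHom).comp
        ((hpdG D h0 hmul hfin).toRingHom) = RingHom.id (Polynomial A) := by
      refine Polynomial.ringHom_ext (fun a => ?_) ?_
      · show hpdG E hE0 hEmul hEfin (hpdG D h0 hmul hfin (Polynomial.C a))
          = Polynomial.C a
        rw [hpdG_C D h0 hmul hfin a]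
        exact hpdG_comp_C E D hE0 hEmul hEfin hfin hconvED a
      · show hpdG E hE0 hEmul hEfin (hpdG D h0 hmul hfin Polynomial.X) = Polynomial.X
        rw [hpdG_X D h0 hmul hfin, hpdG_X E hE0 hEmul hEfin]
    exact fun x => RingHom.congr_fun hrh x
  refine ⟨AlgEquiv.ofAlgHom (hpdG D h0 hmul hfin) (hpdG E hE0 hEmul hEfin)
    (AlgHom.ext hGHcomp) (AlgHom.ext hHGcomp), ?_, ?_, ?_, ?_, ?_⟩
  · intro a
    show hpdG D h0 hmul hfin (Polynomial.C a) = _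
    rw [hpdG_C D h0 hmul hfin a, hpdPhi_eq_finsum D hfin a]
  · show hpdG D h0 hmul hfin Polynomial.X = Polynomial.X
    exact hpdG_X D h0 hmul hfin
  · intro p q
    show hpdG D h0 hmul hfin (PP.bracket p q)
      = PP.bracket (hpdG D h0 hmul hfin p) (hpdG D h0 hmul hfin q)
    rw [hPP, hPP]
    induction p using Polynomial.induction_on' generalizing q with
    | add p p' hp hp' =>
      rw [polyBracketFun_add_left P.bracket br0l br0r P.add_left, map_add, map_add,
        polyBracketFun_add_left P.bracket br0l br0r P.add_left, hp, hp']
    | monomial i a =>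
      induction q using Polynomial.induction_on' with
      | add q q' hq hq' =>
        rw [polyBracketFun_add_right P.bracket br0l br0r braddr, map_add, map_add,
          polyBracketFun_add_right P.bracket br0l br0r braddr, hq, hq']
      | monomial j b =>
        have hGmono : ∀ (n : ℕ) (c : A), hpdG D h0 hmul hfin (Polynomial.monomial n c)
            = hpdPhi D hfin c * Polynomial.X ^ n := by
          intro n c
          rw [← Polynomial.C_mul_X_pow_eq_monomial, map_mul, map_pow,
            hpdG_C D h0 hmul hfin, hpdG_X D h0 hmul hfin]
        rw [polyBracketFun_monomial P.bracket br0l br0r, hGmono, hGmono, hGmono,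
          polyBracketFun_mul_X_pow_left P.bracket br0l br0r,
          polyBracketFun_mul_X_pow_right P.bracket br0l br0r]
        have hphibr : hpdPhi D hfin (P.bracket a b)
            = polyBracketFun P.bracket (hpdPhi D hfin a) (hpdPhi D hfin b) := by
          ext n
          rw [hpdPhi_coeff, polyBracketFun_coeff P.bracket br0l br0r,
            Finset.Nat.sum_antidiagonal_eq_sum_range_succ_mk, hpois]
          exact Finset.sum_congr rfl fun e _ => by rw [hpdPhi_coeff, hpdPhi_coeff]
        rw [hphibr, pow_add]
        ring
  · intro a
    show hpdG E hE0 hEmul hEfin (Polynomial.C a) = _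
    rw [hpdG_C E hE0 hEmul hEfin a]
    have hterm : ∀ i : ℕ, Polynomial.C (D i a) * (-Polynomial.X : Polynomial A) ^ i
        = Polynomial.C (E i a) * Polynomial.X ^ i := by
      intro i
      rw [hEapp, map_mul, map_pow, map_neg, map_one, neg_pow]
      ring
    rw [finsum_congr hterm]
    exact hpdPhi_eq_finsum E hEfin a
  · show hpdG E hE0 hEmul hEfin Polynomial.X = Polynomial.X
    exact hpdG_X E hE0 hEmul hEfin
end

section
/- Let char k = 0, n ≥ 2, and let A = k[x₁,...,xₙ] be the Poisson algebra with bracket {xᵢ, xⱼ} = q·xᵢxⱼ for all i < j, where q ∈ k is nonzero. Then the Poisson center of A is k. -/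
open MvPolynomial

/-- The skew quadratic Poisson polynomial algebra with `{xᵢ,xⱼ} = q xᵢxⱼ` (`i < j`,
`q ≠ 0`, `n ≥ 2`, char 0) has trivial Poisson center. -/
theorem skewQuadratic_trivialCenter {k : Type*} [Field k] [CharZero k]
    (n : ℕ) (hn : 2 ≤ n) (q : k) (hq : q ≠ 0)
    (P : PoissonStructure k (MvPolynomial (Fin n) k))
    (h : ∀ i j : Fin n, i < j →
      P.bracket (MvPolynomial.X i) (MvPolynomial.X j)
        = MvPolynomial.C q * (MvPolynomial.X i * MvPolynomial.X j)) :
    ∀ z : MvPolynomial (Fin n) k,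
      (∀ a, P.bracket z a = 0) → ∃ c : k, z = MvPolynomial.C c := by
  intro z hz
  -- bracket with 1 is zero
  have hone : ∀ a : MvPolynomial (Fin n) k, P.bracket 1 a = 0 := by
    intro a
    have h1 : P.bracket a (1 * 1) = P.bracket a 1 * 1 + 1 * P.bracket a 1 := P.leibniz a 1 1
    rw [one_mul, mul_one, one_mul] at h1
    have h2 : P.bracket a 1 = 0 := left_eq_add.mp h1
    rw [P.antisymm, h2, neg_zero]
  -- bracket X i X i = 0
  have hXX : ∀ i : Fin n, P.bracket (X i) (X i) = 0 := by
    intro i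
    have h1 := P.antisymm (X i) (X i)
    have h3 : (2 : MvPolynomial (Fin n) k) * P.bracket (X i) (X i) = 0 := by
      linear_combination h1
    rcases mul_eq_zero.mp h3 with h4 | h4
    · exact absurd h4 two_ne_zero
    · exact h4
  -- the derivation w ↦ {w, X j}
  let D : Fin n → Derivation k (MvPolynomial (Fin n) k) (MvPolynomial (Fin n) k) := fun j =>
    { toFun := fun w => P.bracket w (X j)
      map_add' := fun a b => P.add_left a b (X j)
      map_smul' := fun r a => by simpa using P.smul_left r a (X j)
      map_one_eq_zero' := hone (X j)
      leibniz' := fun a b => by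
        show P.bracket (a * b) (X j) = a • P.bracket b (X j) + b • P.bracket a (X j)
        rw [smul_eq_mul, smul_eq_mul, P.antisymm, P.leibniz (X j) a b,
          P.antisymm a (X j), P.antisymm b (X j)]
        ring }
  -- sign function
  let s : Fin n → Fin n → ℤ := fun i j => if i < j then 1 else if j < i then -1 else 0
  have hbr : ∀ i j : Fin n, P.bracket (X i) (X j) = (s i j) • (C q * (X i * X j)) := by
    intro i j
    rcases lt_trichotomy i j with hij | hij | hij
    · rw [h i j hij]; simp [s, hij]
    · subst hij; rw [hXX i]; simp [s]
    · rw [P.antisymm, h j i hij]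
      have hnij : ¬ i < j := not_lt.mpr hij.le
      simp only [s, if_neg hnij, if_pos hij, neg_smul, one_smul, neg_inj]
      ring
  let E : Fin n → Derivation k (MvPolynomial (Fin n) k) (MvPolynomial (Fin n) k) := fun j =>
    mkDerivation k (fun i => (s i j) • (C q * (X i * X j)))
  have hDE : ∀ j, D j = E j := by
    intro j
    apply derivation_ext
    intro i
    show P.bracket (X i) (X j) = _
    rw [mkDerivation_X]
    exact hbr i j
  -- weight of a monomial
  let g : Fin n → (Fin n →₀ ℕ) → k := fun j d => ∑ i ∈ d.support, (s i j : k) * (d i : k)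
  have hmono : ∀ (j : Fin n) (d : Fin n →₀ ℕ) (a : k),
      E j (monomial d a) = C q * X j * monomial d (g j d * a) := by
    intro j d a
    show mkDerivation k _ (monomial d a) = _
    rw [mkDerivation_monomial, Finsupp.sum]
    have hterm : ∀ i ∈ d.support,
        monomial (d - Finsupp.single i 1) ((d i : k)) • ((s i j) • (C q * (X i * X j)))
          = C q * X j * monomial d ((s i j : k) * (d i : k)) := by
      intro i hi
      rw [smul_eq_mul, mul_smul_comm, ← Int.cast_smul_eq_zsmul k, smul_eq_C_mul]
      have hXi : monomial (d - Finsupp.single i 1) ((d i : k)) * X i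
          = monomial d ((d i : k)) := by
        rw [X, monomial_mul, mul_one, tsub_add_cancel_of_le]
        exact Finsupp.single_le_iff.mpr
          (Nat.one_le_iff_ne_zero.mpr (Finsupp.mem_support_iff.mp hi))
      calc C ((s i j : k)) * (monomial (d - Finsupp.single i 1) ((d i : k)) * (C q * (X i * X j)))
          = C ((s i j : k)) * (C q * X j
              * (monomial (d - Finsupp.single i 1) ((d i : k)) * X i)) := by ring
        _ = C ((s i j : k)) * (C q * X j * monomial d ((d i : k))) := by rw [hXi]
        _ = C q * X j * (C ((s i j : k)) * monomial d ((d i : k))) := by ring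
        _ = C q * X j * monomial d ((s i j : k) * (d i : k)) := by rw [C_mul_monomial]
    rw [Finset.sum_congr rfl hterm, ← Finset.mul_sum]
    have hms : (∑ i ∈ d.support, monomial d ((s i j : k) * (d i : k))) = monomial d (g j d) := by
      rw [← map_sum (monomial d)]
    rw [hms, smul_eq_C_mul,
      show C a * (C q * X j * monomial d (g j d)) = C q * X j * (C a * monomial d (g j d)) by ring,
      C_mul_monomial, mul_comm a (g j d)]
  -- g vanishes on the support of z
  have hgz : ∀ (j : Fin n) (d : Fin n →₀ ℕ), d ∈ z.support → g j d = 0 := by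
    intro j d hd
    have hEz : E j z = 0 := by rw [← hDE j]; exact hz (X j)
    have hW : C q * X j * (∑ v ∈ z.support, monomial v (g j v * coeff v z)) = 0 := by
      rw [Finset.mul_sum]
      calc ∑ v ∈ z.support, C q * X j * monomial v (g j v * coeff v z)
          = ∑ v ∈ z.support, E j (monomial v (coeff v z)) :=
            Finset.sum_congr rfl fun v _ => (hmono j v (coeff v z)).symm
        _ = E j (∑ v ∈ z.support, monomial v (coeff v z)) := (map_sum (E j).toLinearMap _ _).symm
        _ = E j z := by rw [← as_sum z]
        _ = 0 := hEz
    have hne : C q * X j ≠ (0 : MvPolynomial (Fin n) k) :=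
      mul_ne_zero (by simpa using hq) (X_ne_zero j)
    have hW0 : (∑ v ∈ z.support, monomial v (g j v * coeff v z)) = 0 :=
      (mul_eq_zero.mp hW).resolve_left hne
    have hc : coeff d (∑ v ∈ z.support, monomial v (g j v * coeff v z)) = g j d * coeff d z := by
      rw [coeff_sum, Finset.sum_eq_single d]
      · rw [coeff_monomial, if_pos rfl]
      · intro v _ hv; rw [coeff_monomial, if_neg hv]
      · intro hdd; exact absurd hd hdd
    rw [hW0, coeff_zero] at hc
    rcases mul_eq_zero.mp hc.symm with h0 | h0
    · exact h0
    · exact absurd h0 (mem_support_iff.mp hd)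
  -- combinatorics: every exponent in the support of z is 0
  have hsupp : ∀ d ∈ z.support, d = 0 := by
    intro d hd
    have key : ∀ j : Fin n, (∑ i ∈ d.support.erase j, (d i : k)) = 0 → d.support ⊆ {j} := by
      intro j hsum
      have hnat : (((∑ i ∈ d.support.erase j, d i : ℕ)) : k) = 0 := by
        push_cast; exact hsum
      have hn0 : ∑ i ∈ d.support.erase j, d i = 0 := by exact_mod_cast hnat
      intro i hi
      rw [Finset.mem_singleton]
      by_contra hij
      have : d i = 0 := by
        have := (Finset.sum_eq_zero_iff.mp hn0) i (Finset.mem_erase.mpr ⟨hij, hi⟩)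
        exact this
      exact (Finsupp.mem_support_iff.mp hi) this
    let j0 : Fin n := ⟨0, by omega⟩
    let j1 : Fin n := ⟨n - 1, by omega⟩
    have e0 : ∑ i ∈ d.support.erase j0, (d i : k) = 0 := by
      have hg := hgz j0 d hd
      have h1 : ∑ i ∈ d.support.erase j0, (s i j0 : k) * (d i : k) = g j0 d :=
        Finset.sum_erase _ (by simp [s])
      have h2 : ∑ i ∈ d.support.erase j0, (s i j0 : k) * (d i : k)
          = ∑ i ∈ d.support.erase j0, -(d i : k) := by
        refine Finset.sum_congr rfl fun i hi => ?_
        have hij : i ≠ j0 := Finset.ne_of_mem_erase hi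
        have hv : (i : ℕ) ≠ 0 := fun hvv => hij (Fin.ext hvv)
        have hlt : j0 < i := by
          rw [Fin.lt_def]; exact Nat.pos_of_ne_zero hv
        have hs : s i j0 = -1 := by
          simp [s, hlt, not_lt.mpr hlt.le]
        rw [hs]; push_cast; ring
      rw [h2, hg] at h1
      rw [← neg_eq_zero, ← Finset.sum_neg_distrib, h1]
    have e1 : ∑ i ∈ d.support.erase j1, (d i : k) = 0 := by
      have hg := hgz j1 d hd
      have h1 : ∑ i ∈ d.support.erase j1, (s i j1 : k) * (d i : k) = g j1 d :=
        Finset.sum_erase _ (by simp [s])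
      have h2 : ∑ i ∈ d.support.erase j1, (s i j1 : k) * (d i : k)
          = ∑ i ∈ d.support.erase j1, (d i : k) := by
        refine Finset.sum_congr rfl fun i hi => ?_
        have hij : i ≠ j1 := Finset.ne_of_mem_erase hi
        have hv : (i : ℕ) ≠ n - 1 := fun hvv => hij (Fin.ext hvv)
        have hlt : i < j1 := by
          rw [Fin.lt_def]
          have hj1v : (j1 : ℕ) = n - 1 := rfl
          rw [hj1v]
          have := i.isLt
          omega
        have hs : s i j1 = 1 := by simp [s, hlt]
        rw [hs]; push_cast; ring
      rw [h2, hg] at h1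
      exact h1
    have hje : j0 ≠ j1 := by
      intro hj
      have : (0 : ℕ) = n - 1 := congrArg Fin.val hj
      omega
    have hempty : d.support = ∅ := by
      by_contra hne
      obtain ⟨i, hi⟩ := Finset.nonempty_of_ne_empty hne
      have hi0 := Finset.mem_singleton.mp (key j0 e0 hi)
      have hi1 := Finset.mem_singleton.mp (key j1 e1 hi)
      exact hje (hi0 ▸ hi1 ▸ rfl)
    exact Finsupp.support_eq_empty.mp hempty
  refine ⟨coeff 0 z, ?_⟩
  ext m
  rw [coeff_C]
  by_cases hm : m = 0
  · rw [if_pos hm.symm, hm]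
  · rw [if_neg fun hh => hm hh.symm]
    by_contra hc
    exact hm (hsupp m (mem_support_iff.mpr hc))
end

section
/- Let H = k[x,y,t] over an algebraically closed field k of characteristic zero, with Poisson bracket {x,t} = {y,t} = 0 and {x,y} = t². Then the Poisson center of H is k[t]. Moreover, for α ∈ k nonzero, H/(t−α)H is Poisson simple (isomorphic to the first Poisson Weyl algebra), while H/tH ≅ k[x,y] with trivial bracket is not Poisson simple. -/
set_option synthInstance.maxHeartbeats 1000000
set_option maxHeartbeats 1600000

open MvPolynomial

section Helpers

variable {k : Type*} [Field k] [CharZero k]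

private lemma hw_coeff_pderiv {n : ℕ} (i : Fin n) (f : MvPolynomial (Fin n) k) (m : Fin n →₀ ℕ) :
    coeff m (pderiv i f) = ((m i + 1 : ℕ) : k) * coeff (m + Finsupp.single i 1) f := by
  induction f using MvPolynomial.induction_on' with
  | monomial s a =>
    rw [pderiv_monomial, coeff_monomial, coeff_monomial]
    by_cases h : s = m + Finsupp.single i 1
    · have h1 : s - Finsupp.single i 1 = m := by
        subst h; ext j; simp [Finsupp.tsub_apply]
      have h2 : s i = m i + 1 := by subst h; simp
      simp [h, h1, h2, mul_comm]
    · rw [if_neg h]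
      by_cases h2 : s - Finsupp.single i 1 = m
      · rw [if_pos h2]
        have hsi : s i = 0 := by
          by_contra hsi
          apply h
          ext j
          by_cases hj : j = i
          · subst hj; subst h2; simp [Finsupp.tsub_apply]; omega
          · subst h2; simp [Finsupp.tsub_apply, Finsupp.single_apply, Ne.symm hj]
        simp [hsi]
      · simp [h2]
  | add p q hp hq => simp [map_add, hp, hq, mul_add]

private lemma hw_apply_eq_zero {n : ℕ} {i : Fin n} {f : MvPolynomial (Fin n) k}
    (h : pderiv i f = 0) {m : Fin n →₀ ℕ} (hm : m ∈ f.support) : m i = 0 := by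
  by_contra hmi
  set m' := m - Finsupp.single i 1 with hm'
  have hmm : m' + Finsupp.single i 1 = m := by
    ext j
    by_cases hj : j = i
    · subst hj; simp [hm', Finsupp.tsub_apply]; omega
    · simp [hm', Finsupp.tsub_apply, Finsupp.single_apply, Ne.symm hj]
  have := hw_coeff_pderiv i f m'
  rw [h, hmm] at this
  simp only [coeff_zero] at this
  rcases (mul_eq_zero.mp this.symm) with h1 | h2
  · exact (Nat.cast_ne_zero (R := k)).mpr (Nat.succ_ne_zero (m' i)) h1
  · exact (MvPolynomial.mem_support_iff.mp hm) h2

private lemma hw_totalDegree_pderiv_lt {n : ℕ} {i : Fin n} {f : MvPolynomial (Fin n) k}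
    (h : pderiv i f ≠ 0) : (pderiv i f).totalDegree < f.totalDegree := by
  have htd : 0 < f.totalDegree := by
    rcases Nat.eq_zero_or_pos f.totalDegree |>.symm with h' | h'
    · exact h'
    · exfalso; apply h
      apply MvPolynomial.ext
      intro m
      rw [hw_coeff_pderiv i f m, coeff_zero]
      have : m + Finsupp.single i 1 ∉ f.support := by
        intro hmem
        have := (totalDegree_eq_zero_iff _ f).mp h' _ hmem i
        simp at this
      rw [MvPolynomial.notMem_support_iff.mp this, mul_zero]
  rw [MvPolynomial.totalDegree]
  apply (Finset.sup_lt_iff (by exact htd)).mpr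
  intro m hm
  have hc : coeff m (pderiv i f) ≠ 0 := MvPolynomial.mem_support_iff.mp hm
  rw [hw_coeff_pderiv i f m] at hc
  have hc2 : coeff (m + Finsupp.single i 1) f ≠ 0 := fun h0 => hc (by rw [h0, mul_zero])
  have hle := MvPolynomial.le_totalDegree (MvPolynomial.mem_support_iff.mpr hc2)
  have hsum : (m + Finsupp.single i 1).sum (fun _ e => e) = m.sum (fun _ e => e) + 1 := by
    rw [Finsupp.sum_add_index' (fun _ => rfl) (fun _ _ _ => rfl), Finsupp.sum_single_index rfl]
  omega

private lemma hw_descent (I : Ideal (MvPolynomial (Fin 2) k))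
    (hI : ∀ f ∈ I, pderiv (0 : Fin 2) f ∈ I ∧ pderiv (1 : Fin 2) f ∈ I)
    (f : MvPolynomial (Fin 2) k) (hfI : f ∈ I) (hf0 : f ≠ 0) :
    (1 : MvPolynomial (Fin 2) k) ∈ I := by
  suffices H : ∀ d (f : MvPolynomial (Fin 2) k), f ∈ I → f ≠ 0 → f.totalDegree = d →
      (1 : MvPolynomial (Fin 2) k) ∈ I by exact H f.totalDegree f hfI hf0 rfl
  clear hfI hf0 f
  intro d
  induction d using Nat.strong_induction_on with
  | _ d ih =>
  intro f hfI hf0 hd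
  by_cases h0 : f.totalDegree = 0
  · have hfc : f = C (coeff 0 f) := by
      apply MvPolynomial.ext
      intro m
      by_cases hm : m = 0
      · simp [hm]
      · rw [MvPolynomial.coeff_C, if_neg (Ne.symm hm)]
        by_contra hc
        have hmem : m ∈ f.support := MvPolynomial.mem_support_iff.mpr hc
        have := (totalDegree_eq_zero_iff _ f).mp h0 m hmem
        exact hm (Finsupp.ext fun j => this j)
    have hcne : coeff 0 f ≠ 0 := fun h => hf0 (by rw [hfc, h, map_zero])
    have : (1 : MvPolynomial (Fin 2) k) = C (coeff 0 f)⁻¹ * f := by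
      nth_rewrite 2 [hfc]
      rw [← map_mul, inv_mul_cancel₀ hcne, map_one]
    rw [this]
    exact Ideal.mul_mem_left _ _ hfI
  · have hex : pderiv (0 : Fin 2) f ≠ 0 ∨ pderiv (1 : Fin 2) f ≠ 0 := by
      by_contra hcon
      push_neg at hcon
      apply h0
      rw [totalDegree_eq_zero_iff]
      intro m hm x
      fin_cases x
      · exact hw_apply_eq_zero hcon.1 hm
      · exact hw_apply_eq_zero hcon.2 hm
    rcases hex with h1 | h1
    · exact ih (pderiv 0 f).totalDegree (by rw [← hd]; exact hw_totalDegree_pderiv_lt h1)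
        (pderiv 0 f) (hI f hfI).1 h1 rfl
    · exact ih (pderiv 1 f).totalDegree (by rw [← hd]; exact hw_totalDegree_pderiv_lt h1)
        (pderiv 1 f) (hI f hfI).2 h1 rfl

noncomputable def hwE (α : k) : MvPolynomial (Fin 3) k →ₐ[k] MvPolynomial (Fin 2) k :=
  aeval ![X 0, X 1, C α]

noncomputable def hwI : MvPolynomial (Fin 2) k →ₐ[k] MvPolynomial (Fin 3) k :=
  aeval ![X 0, X 1]

omit [CharZero k] in
@[simp] lemma hwE_X0 (α : k) : hwE α (X 0) = (X 0 : MvPolynomial (Fin 2) k) := by simp [hwE]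
omit [CharZero k] in
@[simp] lemma hwE_X1 (α : k) : hwE α (X 1) = (X 1 : MvPolynomial (Fin 2) k) := by simp [hwE]
omit [CharZero k] in
@[simp] lemma hwE_X2 (α : k) : hwE α (X 2) = (C α : MvPolynomial (Fin 2) k) := by simp [hwE]
omit [CharZero k] in
@[simp] lemma hwI_X0 : hwI (X 0) = (X 0 : MvPolynomial (Fin 3) k) := by simp [hwI]
omit [CharZero k] in
@[simp] lemma hwI_X1 : hwI (X 1) = (X 1 : MvPolynomial (Fin 3) k) := by simp [hwI]

omit [CharZero k] in
lemma hwE_hwI (α : k) (g : MvPolynomial (Fin 2) k) : hwE α (hwI g) = g := by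
  have : (hwE α).comp hwI = AlgHom.id k (MvPolynomial (Fin 2) k) := by
    apply MvPolynomial.algHom_ext
    intro i
    fin_cases i <;> simp
  calc hwE α (hwI g) = ((hwE α).comp hwI) g := rfl
    _ = g := by rw [this]; rfl

omit [CharZero k] in
lemma hwE_surjective (α : k) : Function.Surjective (hwE (k := k) α) :=
  fun g => ⟨hwI g, hwE_hwI α g⟩

omit [CharZero k] in
lemma hw_sub_mem (α : k) (f : MvPolynomial (Fin 3) k) :
    f - hwI (hwE α f) ∈ Ideal.span {X 2 - C α} := by
  induction f using MvPolynomial.induction_on with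
  | C a => simp [Submodule.zero_mem]
  | add p q hp hq =>
    have : p + q - hwI (hwE α (p + q)) = (p - hwI (hwE α p)) + (q - hwI (hwE α q)) := by
      rw [map_add, map_add]; ring
    rw [this]; exact Ideal.add_mem _ hp hq
  | mul_X p i hp =>
    have : p * X i - hwI (hwE α (p * X i)) =
        (p - hwI (hwE α p)) * X i + hwI (hwE α p) * (X i - hwI (hwE α (X i))) := by
      rw [map_mul, map_mul]; ring
    rw [this]
    apply Ideal.add_mem
    · exact Ideal.mul_mem_right _ _ hp
    · apply Ideal.mul_mem_left
      fin_cases i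
      · simp [Submodule.zero_mem]
      · simp [Submodule.zero_mem]
      · show (X 2 : MvPolynomial (Fin 3) k) - hwI (hwE α (X 2)) ∈ _
        rw [hwE_X2]
        have h2 : hwI (C α : MvPolynomial (Fin 2) k) = C α := by simp [hwI]
        rw [h2]
        exact Ideal.subset_span rfl

omit [CharZero k] in
lemma hwE_pderiv (α : k) (j : Fin 2) (f : MvPolynomial (Fin 3) k) :
    hwE α (pderiv (j.castSucc) f) = pderiv j (hwE α f) := by
  induction f using MvPolynomial.induction_on with
  | C a => simp
  | add p q hp hq => simp [map_add, hp, hq]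
  | mul_X p i hp =>
    rw [pderiv_mul, map_add, map_mul, map_mul, hp, map_mul, pderiv_mul]
    congr 1
    congr 1
    fin_cases i <;> fin_cases j <;> simp [pderiv_X, Pi.single_apply]

omit [CharZero k] in
lemma hwE_pderiv0 (α : k) (f : MvPolynomial (Fin 3) k) :
    hwE α (pderiv (0 : Fin 3) f) = pderiv (0 : Fin 2) (hwE α f) := by
  have h : ((0 : Fin 2).castSucc) = (0 : Fin 3) := rfl
  rw [← h, hwE_pderiv]

omit [CharZero k] in
lemma hwE_pderiv1 (α : k) (f : MvPolynomial (Fin 3) k) :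
    hwE α (pderiv (1 : Fin 3) f) = pderiv (1 : Fin 2) (hwE α f) := by
  have h : ((1 : Fin 2).castSucc) = (1 : Fin 3) := rfl
  rw [← h, hwE_pderiv]


/-- Part 2 core: a nonzero ideal of the quotient at t = α whose preimage is closed under
multiplying derivatives by X2² is everything. -/
lemma hw_part2 (α : k) (hα : α ≠ 0)
    (J : Ideal (MvPolynomial (Fin 3) k ⧸ Ideal.span {X 2 - C α}))
    (hclose : ∀ f : MvPolynomial (Fin 3) k,
      Ideal.Quotient.mk (Ideal.span {X 2 - C α}) f ∈ J →
      Ideal.Quotient.mk (Ideal.span {X 2 - C α}) ((X 2 : MvPolynomial (Fin 3) k) ^ 2 * pderiv 0 f) ∈ J ∧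
      Ideal.Quotient.mk (Ideal.span {X 2 - C α}) ((X 2 : MvPolynomial (Fin 3) k) ^ 2 * pderiv 1 f) ∈ J)
    (hJb : J ≠ ⊥) : J = ⊤ := by
  classical
  let mk := Ideal.Quotient.mk (Ideal.span {(X 2 : MvPolynomial (Fin 3) k) - C α})
  let I : Ideal (MvPolynomial (Fin 3) k) := Ideal.comap mk J
  have hImem : ∀ f, f ∈ I ↔ mk f ∈ J := fun f => Iff.rfl
  let I' : Ideal (MvPolynomial (Fin 2) k) := Ideal.map (hwE α) I
  have hsurj := hwE_surjective (k := k) α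
  have hI'mem : ∀ g, g ∈ I' ↔ ∃ f ∈ I, hwE α f = g := fun g =>
    Ideal.mem_map_iff_of_surjective _ hsurj
  have hker : ∀ f, f ∈ Ideal.span {(X 2 : MvPolynomial (Fin 3) k) - C α} → mk f = 0 :=
    fun f hf => Ideal.Quotient.eq_zero_iff_mem.mpr hf
  have hα2 : (α ^ 2 : k) ≠ 0 := pow_ne_zero _ hα
  have hclose' : ∀ g ∈ I', pderiv (0 : Fin 2) g ∈ I' ∧ pderiv (1 : Fin 2) g ∈ I' := by
    intro g hg
    obtain ⟨f, hfI, rfl⟩ := (hI'mem g).mp hg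
    have key : ∀ (h : MvPolynomial (Fin 2) k), C (α ^ 2) * h ∈ I' → h ∈ I' := by
      intro h hh
      have : h = C ((α ^ 2)⁻¹) * (C (α ^ 2) * h) := by
        rw [← mul_assoc, ← map_mul, inv_mul_cancel₀ hα2, map_one, one_mul]
      rw [this]
      exact Ideal.mul_mem_left _ _ hh
    have e0 : hwE α ((X 2 : MvPolynomial (Fin 3) k) ^ 2 * pderiv 0 f) =
        C (α ^ 2) * pderiv (0 : Fin 2) (hwE α f) := by
      rw [map_mul, map_pow, hwE_X2, ← map_pow, hwE_pderiv0]
    have e1 : hwE α ((X 2 : MvPolynomial (Fin 3) k) ^ 2 * pderiv 1 f) =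
        C (α ^ 2) * pderiv (1 : Fin 2) (hwE α f) := by
      rw [map_mul, map_pow, hwE_X2, ← map_pow, hwE_pderiv1]
    constructor
    · apply key
      rw [← e0]
      exact (hI'mem _).mpr ⟨_, (hImem _).mpr (hclose f ((hImem f).mp hfI)).1, rfl⟩
    · apply key
      rw [← e1]
      exact (hI'mem _).mpr ⟨_, (hImem _).mpr (hclose f ((hImem f).mp hfI)).2, rfl⟩
  obtain ⟨x, hxJ, hxne⟩ := Submodule.exists_mem_ne_zero_of_ne_bot hJb
  obtain ⟨f, rfl⟩ := Ideal.Quotient.mk_surjective x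
  have hfI : f ∈ I := (hImem f).mpr hxJ
  have hfne : hwE α f ≠ 0 := by
    intro h0
    apply hxne
    have hsub : f - hwI (hwE α f) ∈ Ideal.span {(X 2 : MvPolynomial (Fin 3) k) - C α} :=
      hw_sub_mem α f
    rw [h0, map_zero, sub_zero] at hsub
    exact hker f hsub
  have hone : (1 : MvPolynomial (Fin 2) k) ∈ I' :=
    hw_descent I' hclose' (hwE α f) ((hI'mem _).mpr ⟨f, hfI, rfl⟩) hfne
  obtain ⟨h, hhI, hh1⟩ := (hI'mem 1).mp hone
  rw [Ideal.eq_top_iff_one]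
  have hmkh : mk h = 1 := by
    have hsub : h - hwI (hwE α h) ∈ Ideal.span {(X 2 : MvPolynomial (Fin 3) k) - C α} :=
      hw_sub_mem α h
    rw [hh1, map_one] at hsub
    have h2 : mk (h - 1) = 0 := hker _ hsub
    rw [map_sub, sub_eq_zero] at h2
    rw [h2, map_one]
  rw [← hmkh]
  exact (hImem h).mp hhI

omit [CharZero k] in
lemma hw_part3_ne_bot :
    Ideal.span {Ideal.Quotient.mk (Ideal.span {(X 2 : MvPolynomial (Fin 3) k)}) (X 0)} ≠ ⊥ := by
  intro hbot
  have hmem : Ideal.Quotient.mk (Ideal.span {(X 2 : MvPolynomial (Fin 3) k)}) (X 0) ∈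
      Ideal.span {Ideal.Quotient.mk (Ideal.span {(X 2 : MvPolynomial (Fin 3) k)}) (X 0)} :=
    Ideal.subset_span rfl
  rw [hbot, Ideal.mem_bot, Ideal.Quotient.eq_zero_iff_mem, Ideal.mem_span_singleton] at hmem
  obtain ⟨c, hc⟩ := hmem
  have := congrArg (aeval ![(1 : k), 0, 0]) hc
  simp at this

omit [CharZero k] in
lemma hw_part3_ne_top :
    Ideal.span {Ideal.Quotient.mk (Ideal.span {(X 2 : MvPolynomial (Fin 3) k)}) (X 0)} ≠ ⊤ := by
  intro htop
  have hmem : (1 : MvPolynomial (Fin 3) k ⧸ Ideal.span {(X 2 : MvPolynomial (Fin 3) k)}) ∈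
      Ideal.span {Ideal.Quotient.mk (Ideal.span {(X 2 : MvPolynomial (Fin 3) k)}) (X 0)} := by
    rw [htop]; trivial
  rw [Ideal.mem_span_singleton] at hmem
  obtain ⟨c, hc⟩ := hmem
  obtain ⟨g, rfl⟩ := Ideal.Quotient.mk_surjective c
  rw [← map_mul, ← map_one (Ideal.Quotient.mk (Ideal.span {(X 2 : MvPolynomial (Fin 3) k)})),
    Ideal.Quotient.eq, Ideal.mem_span_singleton] at hc
  obtain ⟨h, hh⟩ := hc
  have := congrArg (aeval (fun _ => (0 : k))) hh
  simp at this

end Helpers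

set_option maxHeartbeats 1600000 in
/-- For `H = k[x,y,t]` with `{f,g} = t²(f_x g_y − f_y g_x)`: the Poisson center is
`k[t]`; for `α ≠ 0` the quotient `H/(t−α)` is Poisson simple; and `H/(t)` is not
Poisson simple. -/
theorem homogenizedWeyl_center_and_simplicity {k : Type*} [Field k] [IsAlgClosed k]
    [CharZero k]
    (P : PoissonStructure k (MvPolynomial (Fin 3) k))
    (hP : ∀ f g : MvPolynomial (Fin 3) k,
      P.bracket f g = (MvPolynomial.X 2) ^ 2 *
        (MvPolynomial.pderiv 0 f * MvPolynomial.pderiv 1 g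
          - MvPolynomial.pderiv 1 f * MvPolynomial.pderiv 0 g)) :
    (∀ z : MvPolynomial (Fin 3) k,
      (∀ a, P.bracket z a = 0) ↔ z ∈ Algebra.adjoin k {(MvPolynomial.X 2 : MvPolynomial (Fin 3) k)}) ∧
    (∀ α : k, α ≠ 0 →
      ∀ Q : PoissonStructure k
        (MvPolynomial (Fin 3) k ⧸ Ideal.span {MvPolynomial.X 2 - MvPolynomial.C α}),
        (∀ f g : MvPolynomial (Fin 3) k,
          Q.bracket
            (Ideal.Quotient.mk (Ideal.span {MvPolynomial.X 2 - MvPolynomial.C α}) f)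
            (Ideal.Quotient.mk (Ideal.span {MvPolynomial.X 2 - MvPolynomial.C α}) g)
          = Ideal.Quotient.mk (Ideal.span {MvPolynomial.X 2 - MvPolynomial.C α})
              (P.bracket f g)) →
        ∀ J : Ideal (MvPolynomial (Fin 3) k ⧸
            Ideal.span {MvPolynomial.X 2 - MvPolynomial.C α}),
          (∀ x ∈ J, ∀ a, Q.bracket x a ∈ J) → J = ⊥ ∨ J = ⊤) ∧
    (∀ Q : PoissonStructure k
        (MvPolynomial (Fin 3) k ⧸ Ideal.span {(MvPolynomial.X 2 : MvPolynomial (Fin 3) k)}),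
      (∀ f g : MvPolynomial (Fin 3) k,
        Q.bracket
          (Ideal.Quotient.mk (Ideal.span {(MvPolynomial.X 2 : MvPolynomial (Fin 3) k)}) f)
          (Ideal.Quotient.mk (Ideal.span {(MvPolynomial.X 2 : MvPolynomial (Fin 3) k)}) g)
        = Ideal.Quotient.mk (Ideal.span {(MvPolynomial.X 2 : MvPolynomial (Fin 3) k)})
            (P.bracket f g)) →
      ∃ J : Ideal (MvPolynomial (Fin 3) k ⧸
          Ideal.span {(MvPolynomial.X 2 : MvPolynomial (Fin 3) k)}),
        (∀ x ∈ J, ∀ a, Q.bracket x a ∈ J) ∧ J ≠ ⊥ ∧ J ≠ ⊤) := by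
  have hX2ne : (X 2 : MvPolynomial (Fin 3) k) ^ 2 ≠ 0 := pow_ne_zero _ (X_ne_zero 2)
  refine ⟨?_, ?_, ?_⟩
  · -- Part 1 : Poisson center
    intro z
    constructor
    · intro hz
      have h0 : pderiv (0 : Fin 3) z = 0 := by
        have h := hz (X 1)
        rw [hP] at h
        simp only [pderiv_X_self, pderiv_X_of_ne (by decide : (1 : Fin 3) ≠ 0),
          mul_one, mul_zero, sub_zero] at h
        exact (mul_eq_zero.mp h).resolve_left hX2ne
      have h1 : pderiv (1 : Fin 3) z = 0 := by
        have h := hz (X 0)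
        rw [hP] at h
        simp only [pderiv_X_self, pderiv_X_of_ne (by decide : (0 : Fin 3) ≠ 1),
          mul_one, mul_zero, zero_sub, mul_neg] at h
        rw [neg_eq_zero] at h
        exact (mul_eq_zero.mp h).resolve_left hX2ne
      rw [← support_sum_monomial_coeff z]
      apply Subalgebra.sum_mem
      intro m hm
      have hm0 : m 0 = 0 := hw_apply_eq_zero h0 hm
      have hm1 : m 1 = 0 := hw_apply_eq_zero h1 hm
      have hms : m = Finsupp.single 2 (m 2) := by
        ext j
        fin_cases j <;> simp [hm0, hm1, Finsupp.single_apply]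
      rw [hms, ← MvPolynomial.C_mul_X_pow_eq_monomial, ← smul_eq_C_mul]
      have hX : (X 2 : MvPolynomial (Fin 3) k) ∈
          Algebra.adjoin k {(X 2 : MvPolynomial (Fin 3) k)} := Algebra.subset_adjoin rfl
      have hXp := Subalgebra.pow_mem _ hX (m 2)
      exact Subalgebra.smul_mem _ hXp _
    · intro hz a
      rw [hP]
      have h01 : pderiv (0 : Fin 3) z = 0 ∧ pderiv (1 : Fin 3) z = 0 := by
        induction hz using Algebra.adjoin_induction with
        | mem x hx =>
          rw [Set.mem_singleton_iff] at hx
          subst hx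
          constructor
          · exact pderiv_X_of_ne (by decide)
          · exact pderiv_X_of_ne (by decide)
        | algebraMap r => constructor <;> simp [MvPolynomial.algebraMap_eq]
        | add x y hx hy ihx ihy => constructor <;> simp [ihx.1, ihx.2, ihy.1, ihy.2]
        | mul x y hx hy ihx ihy =>
          constructor <;> simp [pderiv_mul, ihx.1, ihx.2, ihy.1, ihy.2]
      rw [h01.1, h01.2]
      ring
  · -- Part 2 : quotient at t = α is Poisson simple
    intro α hα Q hQ J hJ
    by_cases hJb : J = ⊥
    · left; exact hJb
    right
    apply hw_part2 α hα J _ hJb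
    intro f hf
    constructor
    · have hb := hJ _ hf (Ideal.Quotient.mk (Ideal.span {X 2 - C α}) (X 1))
      rw [hQ, hP] at hb
      simp only [pderiv_X_self, pderiv_X_of_ne (by decide : (1 : Fin 3) ≠ 0),
        mul_one, mul_zero, sub_zero] at hb
      exact hb
    · have hb := hJ _ hf (Ideal.Quotient.mk (Ideal.span {X 2 - C α}) (X 0))
      rw [hQ, hP] at hb
      simp only [pderiv_X_self, pderiv_X_of_ne (by decide : (0 : Fin 3) ≠ 1),
        mul_one, mul_zero, zero_sub, mul_neg] at hb
      have hb2 := J.neg_mem hb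
      rw [← map_neg, neg_neg] at hb2
      exact hb2
  · -- Part 3 : quotient at t = 0 is not Poisson simple
    intro Q hQ
    refine ⟨Ideal.span {Ideal.Quotient.mk (Ideal.span {(X 2 : MvPolynomial (Fin 3) k)}) (X 0)},
      ?_, hw_part3_ne_bot, hw_part3_ne_top⟩
    intro x hx a
    obtain ⟨f, rfl⟩ := Ideal.Quotient.mk_surjective x
    obtain ⟨g, rfl⟩ := Ideal.Quotient.mk_surjective a
    rw [hQ, hP]
    have hz : Ideal.Quotient.mk (Ideal.span {(X 2 : MvPolynomial (Fin 3) k)})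
        ((X 2 : MvPolynomial (Fin 3) k) ^ 2 *
          (pderiv 0 f * pderiv 1 g - pderiv 1 f * pderiv 0 g)) = 0 := by
      rw [Ideal.Quotient.eq_zero_iff_mem]
      apply Ideal.mul_mem_right
      exact Ideal.mem_span_singleton.mpr (dvd_pow_self _ two_ne_zero)
    rw [hz]
    exact Submodule.zero_mem _
end
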